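/- arXiv:0707.3499 — 9 statements merged into one kernel-verified Lean document; each statement's English description precedes it below -/
import Mathlib

section
/- Let 𝔾 = (G, ε, δ) be a comonad on a category C, and let E_𝔾 denote the class of those morphisms e : A → B of C such that for every object Y the map Hom(GY, A) → Hom(GY, B), h ↦ e ∘ h, is surjective. Then an object P of C is E_𝔾-projective (meaning that for every e : A → B in E_𝔾 the map Hom(P, A) → Hom(P, B), h ↦ e ∘ h, is surjective) if and only if there exists a morphism s : P → GP with ε_P ∘ s = 1_P. -/
open CategoryTheory

/-- Let `𝔾 = (G, ε, δ)` be a comonad on `C` and let `E_𝔾` be the class of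
morphisms `e : A ⟶ B` such that for every `Y` the map `Hom(GY, A) → Hom(GY, B)`,
`h ↦ e ∘ h`, is surjective.  An object `P` is `E_𝔾`-projective if and only if there is a
morphism `s : P ⟶ GP` with `ε_P ∘ s = 1_P`. -/
theorem statement3 {C : Type*} [Category C] (G : Comonad C) (P : C) :
    (∀ {A B : C} (e : A ⟶ B),
        (∀ Y : C, Function.Surjective (fun h : G.obj Y ⟶ A => h ≫ e)) →
        Function.Surjective (fun h : P ⟶ A => h ≫ e)) ↔
      ∃ s : P ⟶ G.obj P, s ≫ G.ε.app P = 𝟙 P := by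
  constructor
  · intro hp
    have hE : ∀ Y : C, Function.Surjective
        (fun h : G.obj Y ⟶ G.obj P => h ≫ G.ε.app P) := by
      intro Y g
      refine ⟨G.δ.app Y ≫ G.map g, ?_⟩
      have := G.ε.naturality g
      simp only [Functor.id_map] at this
      simp [this]
    obtain ⟨s, hs⟩ := hp (G.ε.app P) hE (𝟙 P)
    exact ⟨s, hs⟩
  · rintro ⟨s, hs⟩ A B e he f
    obtain ⟨h, hh⟩ := he P (G.ε.app P ≫ f)
    refine ⟨s ≫ h, ?_⟩
    simp only at hh ⊢
    rw [Category.assoc, hh, ← Category.assoc, hs, Category.id_comp]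
end

section
/- Let C be a category, P an object of C, and A = (A_n)_{n ≥ −1} an augmented simplicial object of C such that the augmented simplicial set Hom(P, A) is contractible and Kan. Let n ≥ 0. Given a family of morphisms (aᵢ : P → A_{n−1})_{i ∈ [n]} satisfying ∂ᵢ ∘ a_j = ∂_{j−1} ∘ aᵢ for all i < j, there exists a morphism a : P → A_n with ∂ᵢ ∘ a = aᵢ for all i ∈ [n]. -/
namespace Statement5

open CategoryTheory

variable {C : Type*} [Category C]

/-- An augmented simplicial object `A = (Aₙ)_{n ≥ -1}` in a category `C`:
`obj n = Aₙ` for `n ≥ 0`, `pt = A₋₁`, face operators `d n i : Aₙ₊₁ ⟶ Aₙ`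
(meaningful for `i ≤ n + 1`), degeneracy operators `s n i : Aₙ ⟶ Aₙ₊₁`
(meaningful for `i ≤ n`), and augmentation `aug : A₀ ⟶ A₋₁`, subject to the
simplicial identities. -/
structure AugSimp (C : Type*) [Category C] where
  obj : ℕ → C
  pt : C
  d : (n i : ℕ) → (obj (n + 1) ⟶ obj n)
  s : (n i : ℕ) → (obj n ⟶ obj (n + 1))
  aug : obj 0 ⟶ pt
  dd : ∀ n i j, i < j → j ≤ n + 2 →
    d (n + 1) j ≫ d n i = d (n + 1) i ≫ d n (j - 1)
  daug : d 0 0 ≫ aug = d 0 1 ≫ aug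
  ds_lt : ∀ n i j, i < j → j ≤ n + 1 →
    s (n + 1) j ≫ d (n + 1) i = d n i ≫ s n (j - 1)
  ds_eq : ∀ n i, i ≤ n → s n i ≫ d n i = 𝟙 (obj n)
  ds_eq' : ∀ n i, i ≤ n → s n i ≫ d n (i + 1) = 𝟙 (obj n)
  ds_gt : ∀ n i j, j + 1 < i → i ≤ n + 2 →
    s (n + 1) j ≫ d (n + 1) i = d n (i - 1) ≫ s n j
  ss : ∀ n i j, i ≤ j → j ≤ n →
    s n j ≫ s (n + 1) i = s n i ≫ s (n + 1) (j + 1)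

/-- The augmented simplicial set `Hom(P, A)` is contractible: it admits a contraction,
i.e. maps `hₙ : Hom(P, Aₙ) → Hom(P, Aₙ₊₁)` for `n ≥ -1` with `∂₀ hₙ = 1` and
`∂ᵢ hₙ = hₙ₋₁ ∂ᵢ₋₁` for `i > 0`. -/
def AugSimp.ContractibleAt (A : AugSimp C) (P : C) : Prop :=
  ∃ (hm : (P ⟶ A.pt) → (P ⟶ A.obj 0))
    (h : (n : ℕ) → (P ⟶ A.obj n) → (P ⟶ A.obj (n + 1))),
    (∀ x : P ⟶ A.pt, hm x ≫ A.aug = x) ∧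
    (∀ (n : ℕ) (x : P ⟶ A.obj n), h n x ≫ A.d n 0 = x) ∧
    (∀ x : P ⟶ A.obj 0, h 0 x ≫ A.d 0 1 = hm (x ≫ A.aug)) ∧
    (∀ (n : ℕ) (x : P ⟶ A.obj (n + 1)) (i : ℕ), 1 ≤ i → i ≤ n + 2 →
      h (n + 1) x ≫ A.d (n + 1) i = h n (x ≫ A.d n (i - 1)))

/-- The simplicial set `Hom(P, A)` is Kan: every `(n, k)`-horn has a filler.
The first clause treats horns of dimension `1`, the second those of dimension `≥ 2`. -/
def AugSimp.KanAt (A : AugSimp C) (P : C) : Prop :=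
  (∀ k, k ≤ 1 → ∀ a : ℕ → (P ⟶ A.obj 0),
    ∃ b : P ⟶ A.obj 1, ∀ i, i ≤ 1 → i ≠ k → b ≫ A.d 0 i = a i) ∧
  (∀ (n k : ℕ), k ≤ n + 2 → ∀ a : ℕ → (P ⟶ A.obj (n + 1)),
    (∀ i j, i < j → j ≤ n + 2 → i ≠ k → j ≠ k →
      a j ≫ A.d n i = a i ≫ A.d n (j - 1)) →
    ∃ b : P ⟶ A.obj (n + 2), ∀ i, i ≤ n + 2 → i ≠ k → b ≫ A.d (n + 1) i = a i)

/-- Let `P` be an object and `A` an augmented simplicial object such that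
the augmented simplicial set `Hom(P, A)` is contractible and Kan.  For every `n ≥ 0`,
any family `(aᵢ : P ⟶ Aₙ₋₁)_{i ∈ [n]}` with `∂ᵢ aⱼ = ∂ⱼ₋₁ aᵢ` for `i < j` lifts to
`a : P ⟶ Aₙ` with `∂ᵢ a = aᵢ`.  The three clauses are the cases `n = 0`, `n = 1` and
`n ≥ 2` (where the faces of `A₀` into `A₋₁` are given by the augmentation). -/
theorem statement5 (A : AugSimp C) (P : C)
    (hc : A.ContractibleAt P) (hk : A.KanAt P) :
    (∀ a₀ : P ⟶ A.pt, ∃ a : P ⟶ A.obj 0, a ≫ A.aug = a₀) ∧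
    (∀ a₀ a₁ : P ⟶ A.obj 0, a₁ ≫ A.aug = a₀ ≫ A.aug →
      ∃ a : P ⟶ A.obj 1, a ≫ A.d 0 0 = a₀ ∧ a ≫ A.d 0 1 = a₁) ∧
    (∀ (n : ℕ) (a : ℕ → (P ⟶ A.obj (n + 1))),
      (∀ i j, i < j → j ≤ n + 2 → a j ≫ A.d n i = a i ≫ A.d n (j - 1)) →
      ∃ b : P ⟶ A.obj (n + 2), ∀ i, i ≤ n + 2 → b ≫ A.d (n + 1) i = a i) := by
  obtain ⟨hm, h, Hm, H0, H1, H2⟩ := hc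
  obtain ⟨-, K⟩ := hk
  refine ⟨fun a₀ => ⟨hm a₀, Hm a₀⟩, ?_, ?_⟩
  · -- dimension 1 case
    intro a₀ a₁ hcomp
    have compat : ∀ i j, i < j → j ≤ 0 + 2 → i ≠ 0 → j ≠ 0 →
        (fun j => if j = 2 then h 0 a₁ else h 0 a₀) j ≫ A.d 0 i
          = (fun j => if j = 2 then h 0 a₁ else h 0 a₀) i ≫ A.d 0 (j - 1) := by
      intro i j hij hj hi0 hj0
      have hi : i = 1 := by omega
      have hjj : j = 2 := by omega
      subst hi; subst hjj
      norm_num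
      rw [H1 a₁, H1 a₀, hcomp]
    obtain ⟨c, hc⟩ := K 0 0 (by omega)
      (fun j => if j = 2 then h 0 a₁ else h 0 a₀) compat
    refine ⟨c ≫ A.d 1 0, ?_, ?_⟩
    · have e := A.dd 0 0 1 (by omega) (by omega)
      calc (c ≫ A.d 1 0) ≫ A.d 0 0 = c ≫ (A.d 1 0 ≫ A.d 0 0) := Category.assoc ..
        _ = c ≫ (A.d 1 1 ≫ A.d 0 0) := by rw [← e]
        _ = (c ≫ A.d 1 1) ≫ A.d 0 0 := (Category.assoc ..).symm
        _ = h 0 a₀ ≫ A.d 0 0 := by rw [hc 1 (by omega) (by omega)]; norm_num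
        _ = a₀ := H0 0 a₀
    · have e := A.dd 0 0 2 (by omega) (by omega)
      calc (c ≫ A.d 1 0) ≫ A.d 0 1 = c ≫ (A.d 1 0 ≫ A.d 0 1) := Category.assoc ..
        _ = c ≫ (A.d 1 2 ≫ A.d 0 0) := by rw [e]
        _ = (c ≫ A.d 1 2) ≫ A.d 0 0 := (Category.assoc ..).symm
        _ = h 0 a₁ ≫ A.d 0 0 := by rw [hc 2 (by omega) (by omega)]; norm_num
        _ = a₁ := H0 0 a₁
  · -- dimension ≥ 2 case
    intro n a ha
    have compat : ∀ i j, i < j → j ≤ n + 1 + 2 → i ≠ 0 → j ≠ 0 →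
        (fun j => h (n + 1) (a (j - 1))) j ≫ A.d (n + 1) i
          = (fun j => h (n + 1) (a (j - 1))) i ≫ A.d (n + 1) (j - 1) := by
      intro i j hij hj hi0 hj0
      have hi1 : 1 ≤ i := by omega
      have hj2 : 2 ≤ j := by omega
      have e1 : h (n + 1) (a (j - 1)) ≫ A.d (n + 1) i
          = h n (a (j - 1) ≫ A.d n (i - 1)) := H2 n (a (j - 1)) i hi1 (by omega)
      have e2 : h (n + 1) (a (i - 1)) ≫ A.d (n + 1) (j - 1)
          = h n (a (i - 1) ≫ A.d n (j - 1 - 1)) :=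
        H2 n (a (i - 1)) (j - 1) (by omega) (by omega)
      have e3 : a (j - 1) ≫ A.d n (i - 1) = a (i - 1) ≫ A.d n (j - 1 - 1) :=
        ha (i - 1) (j - 1) (by omega) (by omega)
      simp only [e1, e2, e3]
    obtain ⟨c, hc⟩ := K (n + 1) 0 (by omega)
      (fun j => h (n + 1) (a (j - 1))) compat
    refine ⟨c ≫ A.d (n + 2) 0, fun i hi => ?_⟩
    have e := A.dd (n + 1) 0 (i + 1) (by omega) (by omega)
    simp only [Nat.add_sub_cancel] at e
    calc (c ≫ A.d (n + 2) 0) ≫ A.d (n + 1) i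
        = c ≫ (A.d (n + 2) 0 ≫ A.d (n + 1) i) := Category.assoc ..
      _ = c ≫ (A.d (n + 2) (i + 1) ≫ A.d (n + 1) 0) := by rw [e]
      _ = (c ≫ A.d (n + 2) (i + 1)) ≫ A.d (n + 1) 0 := (Category.assoc ..).symm
      _ = h (n + 1) (a (i + 1 - 1)) ≫ A.d (n + 1) 0 := by
          rw [hc (i + 1) (by omega) (by omega)]
      _ = a i := by rw [Nat.add_sub_cancel]; exact H0 (n + 1) (a i)

end Statement5
end

section
/- (Comparison Theorem, existence part.) Let C be a category, P = (P_n)_{n ≥ −1} an augmented simplicial object of C with P_{−1} = X, and A = (A_n)_{n ≥ −1} an augmented simplicial object of C with A_{−1} = Y, such that for every i ≥ 0 the augmented simplicial set Hom(Pᵢ, A) is contractible and Kan. Then every morphism f : X → Y can be extended to a semi-simplicial map f : P → A, i.e., there exist morphisms f_n : P_n → A_n for n ≥ 0 with f_{−1} = f such that ∂ᵢ ∘ f_n = f_{n−1} ∘ ∂ᵢ for all n ≥ 0 and all faces ∂ᵢ (including the augmentations). -/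
namespace Statement6

open CategoryTheory

variable {C : Type*} [Category C]

/-- An augmented simplicial object `A = (Aₙ)_{n ≥ -1}` in a category `C`:
`obj n = Aₙ` for `n ≥ 0`, `pt = A₋₁`, face operators `d n i : Aₙ₊₁ ⟶ Aₙ`
(meaningful for `i ≤ n + 1`), degeneracy operators `s n i : Aₙ ⟶ Aₙ₊₁`
(meaningful for `i ≤ n`), and augmentation `aug : A₀ ⟶ A₋₁`, subject to the
simplicial identities. -/
structure AugSimp (C : Type*) [Category C] where
  obj : ℕ → C
  pt : C
  d : (n i : ℕ) → (obj (n + 1) ⟶ obj n)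
  s : (n i : ℕ) → (obj n ⟶ obj (n + 1))
  aug : obj 0 ⟶ pt
  dd : ∀ n i j, i < j → j ≤ n + 2 →
    d (n + 1) j ≫ d n i = d (n + 1) i ≫ d n (j - 1)
  daug : d 0 0 ≫ aug = d 0 1 ≫ aug
  ds_lt : ∀ n i j, i < j → j ≤ n + 1 →
    s (n + 1) j ≫ d (n + 1) i = d n i ≫ s n (j - 1)
  ds_eq : ∀ n i, i ≤ n → s n i ≫ d n i = 𝟙 (obj n)
  ds_eq' : ∀ n i, i ≤ n → s n i ≫ d n (i + 1) = 𝟙 (obj n)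
  ds_gt : ∀ n i j, j + 1 < i → i ≤ n + 2 →
    s (n + 1) j ≫ d (n + 1) i = d n (i - 1) ≫ s n j
  ss : ∀ n i j, i ≤ j → j ≤ n →
    s n j ≫ s (n + 1) i = s n i ≫ s (n + 1) (j + 1)

/-- The augmented simplicial set `Hom(P, A)` is contractible: it admits a contraction,
i.e. maps `hₙ : Hom(P, Aₙ) → Hom(P, Aₙ₊₁)` for `n ≥ -1` with `∂₀ hₙ = 1` and
`∂ᵢ hₙ = hₙ₋₁ ∂ᵢ₋₁` for `i > 0`. -/
def AugSimp.ContractibleAt (A : AugSimp C) (P : C) : Prop :=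
  ∃ (hm : (P ⟶ A.pt) → (P ⟶ A.obj 0))
    (h : (n : ℕ) → (P ⟶ A.obj n) → (P ⟶ A.obj (n + 1))),
    (∀ x : P ⟶ A.pt, hm x ≫ A.aug = x) ∧
    (∀ (n : ℕ) (x : P ⟶ A.obj n), h n x ≫ A.d n 0 = x) ∧
    (∀ x : P ⟶ A.obj 0, h 0 x ≫ A.d 0 1 = hm (x ≫ A.aug)) ∧
    (∀ (n : ℕ) (x : P ⟶ A.obj (n + 1)) (i : ℕ), 1 ≤ i → i ≤ n + 2 →
      h (n + 1) x ≫ A.d (n + 1) i = h n (x ≫ A.d n (i - 1)))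

/-- The simplicial set `Hom(P, A)` is Kan: every `(n, k)`-horn has a filler.
The first clause treats horns of dimension `1`, the second those of dimension `≥ 2`. -/
def AugSimp.KanAt (A : AugSimp C) (P : C) : Prop :=
  (∀ k, k ≤ 1 → ∀ a : ℕ → (P ⟶ A.obj 0),
    ∃ b : P ⟶ A.obj 1, ∀ i, i ≤ 1 → i ≠ k → b ≫ A.d 0 i = a i) ∧
  (∀ (n k : ℕ), k ≤ n + 2 → ∀ a : ℕ → (P ⟶ A.obj (n + 1)),
    (∀ i j, i < j → j ≤ n + 2 → i ≠ k → j ≠ k →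
      a j ≫ A.d n i = a i ≫ A.d n (j - 1)) →
    ∃ b : P ⟶ A.obj (n + 2), ∀ i, i ≤ n + 2 → i ≠ k → b ≫ A.d (n + 1) i = a i)

section Aux

/-- In a contractible Kan `Hom(P, A)`, every compatible `0`-sphere has a filler. -/
lemma exists_fill0 {A : AugSimp C} {P : C} (hc : A.ContractibleAt P) (hk : A.KanAt P)
    (a0 a1 : P ⟶ A.obj 0) (hcompat : a0 ≫ A.aug = a1 ≫ A.aug) :
    ∃ b : P ⟶ A.obj 1, b ≫ A.d 0 0 = a0 ∧ b ≫ A.d 0 1 = a1 := by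
  obtain ⟨hm, hmap, Hhm, Hd0, H01, Hdi⟩ := hc
  have compat : ∀ i j, i < j → j ≤ 0 + 2 → i ≠ 0 → j ≠ 0 →
      (fun i => hmap 0 (if i = 1 then a0 else a1)) j ≫ A.d 0 i =
      (fun i => hmap 0 (if i = 1 then a0 else a1)) i ≫ A.d 0 (j - 1) := by
    intro i j hij hj hi0 hj0
    have hi1 : i = 1 := by omega
    have hj2 : j = 2 := by omega
    subst hi1; subst hj2
    simp only [if_pos rfl, if_neg (by omega : (2 : ℕ) ≠ 1)]
    show hmap 0 a1 ≫ A.d 0 1 = hmap 0 a0 ≫ A.d 0 1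
    rw [H01, H01, hcompat]
  obtain ⟨z, hz⟩ := hk.2 0 0 (by omega) (fun i => hmap 0 (if i = 1 then a0 else a1)) compat
  refine ⟨z ≫ A.d 1 0, ?_, ?_⟩
  · have e : A.d 1 1 ≫ A.d 0 0 = A.d 1 0 ≫ A.d 0 0 := A.dd 0 0 1 (by omega) (by omega)
    rw [Category.assoc, ← e, ← Category.assoc, hz 1 (by omega) (by omega)]
    simpa using Hd0 0 a0
  · have e : A.d 1 2 ≫ A.d 0 0 = A.d 1 0 ≫ A.d 0 1 := A.dd 0 0 2 (by omega) (by omega)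
    rw [Category.assoc, ← e, ← Category.assoc, hz 2 (by omega) (by omega)]
    simpa using Hd0 0 a1

/-- In a contractible Kan `Hom(P, A)`, every compatible `(n+1)`-sphere has a filler. -/
lemma exists_fill {A : AugSimp C} {P : C} (hc : A.ContractibleAt P) (hk : A.KanAt P)
    (n : ℕ) (a : ℕ → (P ⟶ A.obj (n + 1)))
    (hcompat : ∀ i j, i < j → j ≤ n + 2 → a j ≫ A.d n i = a i ≫ A.d n (j - 1)) :
    ∃ b : P ⟶ A.obj (n + 2), ∀ i, i ≤ n + 2 → b ≫ A.d (n + 1) i = a i := by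
  obtain ⟨hm, hmap, Hhm, Hd0, H01, Hdi⟩ := hc
  have compat : ∀ i j, i < j → j ≤ (n + 1) + 2 → i ≠ 0 → j ≠ 0 →
      (fun i => hmap (n + 1) (a (i - 1))) j ≫ A.d (n + 1) i =
      (fun i => hmap (n + 1) (a (i - 1))) i ≫ A.d (n + 1) (j - 1) := by
    intro i j hij hj hi0 hj0
    have e1 : hmap (n + 1) (a (j - 1)) ≫ A.d (n + 1) i =
        hmap n (a (j - 1) ≫ A.d n (i - 1)) := Hdi n (a (j - 1)) i (by omega) (by omega)
    have e2 : hmap (n + 1) (a (i - 1)) ≫ A.d (n + 1) (j - 1) =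
        hmap n (a (i - 1) ≫ A.d n (j - 1 - 1)) := Hdi n (a (i - 1)) (j - 1) (by omega) (by omega)
    show hmap (n + 1) (a (j - 1)) ≫ A.d (n + 1) i =
        hmap (n + 1) (a (i - 1)) ≫ A.d (n + 1) (j - 1)
    rw [e1, e2, hcompat (i - 1) (j - 1) (by omega) (by omega)]
  obtain ⟨z, hz⟩ := hk.2 (n + 1) 0 (by omega) (fun i => hmap (n + 1) (a (i - 1))) compat
  refine ⟨z ≫ A.d (n + 2) 0, fun i hi => ?_⟩
  have e : A.d (n + 2) (i + 1) ≫ A.d (n + 1) 0 = A.d (n + 2) 0 ≫ A.d (n + 1) i :=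
    A.dd (n + 1) 0 (i + 1) (by omega) (by omega)
  have hz' : z ≫ A.d (n + 2) (i + 1) = hmap (n + 1) (a (i + 1 - 1)) :=
    hz (i + 1) (by omega) (by omega)
  rw [Category.assoc, ← e, ← Category.assoc, hz']
  simpa using Hd0 (n + 1) (a i)

/-- Degree-0 component. -/
lemma exists_base {A : AugSimp C} {P : C} (hc : A.ContractibleAt P) (y : P ⟶ A.pt) :
    ∃ g : P ⟶ A.obj 0, g ≫ A.aug = y := by
  obtain ⟨hm, hmap, Hhm, _⟩ := hc
  exact ⟨hm y, Hhm y⟩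

variable (P A : AugSimp C)
  (h : ∀ i : ℕ, A.ContractibleAt (P.obj i) ∧ A.KanAt (P.obj i)) (f : P.pt ⟶ A.pt)

/-- The data carried through the recursion: a pair of consecutive components together
with the compatibility between them. -/
def MData (n : ℕ) :=
  Σ' (g : P.obj n ⟶ A.obj n) (g' : P.obj (n + 1) ⟶ A.obj (n + 1)),
    ∀ i, i ≤ n + 1 → g' ≫ A.d n i = P.d n i ≫ g

noncomputable def gZero : P.obj 0 ⟶ A.obj 0 :=
  (exists_base (h 0).1 (P.aug ≫ f)).choose

lemma gZero_spec : gZero P A h f ≫ A.aug = P.aug ≫ f :=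
  (exists_base (h 0).1 (P.aug ≫ f)).choose_spec

lemma exists_gOne : ∃ b : P.obj 1 ⟶ A.obj 1,
    b ≫ A.d 0 0 = P.d 0 0 ≫ gZero P A h f ∧ b ≫ A.d 0 1 = P.d 0 1 ≫ gZero P A h f := by
  refine exists_fill0 (h 1).1 (h 1).2 _ _ ?_
  rw [Category.assoc, Category.assoc, gZero_spec, ← Category.assoc, ← Category.assoc, P.daug]

noncomputable def base : MData P A 0 :=
  ⟨gZero P A h f, (exists_gOne P A h f).choose, fun i hi => by
    match i, hi with
    | 0, _ => exact (exists_gOne P A h f).choose_spec.1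
    | 1, _ => exact (exists_gOne P A h f).choose_spec.2⟩

lemma step_compat (n : ℕ) (p : MData P A n) :
    ∀ i j, i < j → j ≤ n + 2 →
      (P.d (n + 1) j ≫ p.2.1) ≫ A.d n i = (P.d (n + 1) i ≫ p.2.1) ≫ A.d n (j - 1) := by
  intro i j hij hj
  rw [Category.assoc, Category.assoc, p.2.2 i (by omega), p.2.2 (j - 1) (by omega),
    ← Category.assoc, ← Category.assoc, P.dd n i j hij hj]

noncomputable def step (n : ℕ) (p : MData P A n) : MData P A (n + 1) :=
  ⟨p.2.1,
    (exists_fill (h (n + 2)).1 (h (n + 2)).2 n (fun i => P.d (n + 1) i ≫ p.2.1)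
      (step_compat P A n p)).choose,
    fun i hi =>
      (exists_fill (h (n + 2)).1 (h (n + 2)).2 n (fun i => P.d (n + 1) i ≫ p.2.1)
        (step_compat P A n p)).choose_spec i hi⟩

noncomputable def seq : ∀ n : ℕ, MData P A n := fun n =>
  Nat.rec (base P A h f) (fun n p => step P A h n p) n

end Aux

/-- Comparison Theorem, existence part.  Let `P` be an augmented
simplicial object over `X = P.pt` and `A` an augmented simplicial object over `Y = A.pt`,
such that for every `i ≥ 0` the augmented simplicial set `Hom(Pᵢ, A)` is contractible and
Kan.  Then every morphism `f : X ⟶ Y` extends to a semi-simplicial map `P ⟶ A`, i.e.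
a family `fₙ : Pₙ ⟶ Aₙ` commuting with all faces and the augmentations. -/
theorem statement6 (P A : AugSimp C)
    (h : ∀ i : ℕ, A.ContractibleAt (P.obj i) ∧ A.KanAt (P.obj i))
    (f : P.pt ⟶ A.pt) :
    ∃ fn : ∀ n : ℕ, P.obj n ⟶ A.obj n,
      fn 0 ≫ A.aug = P.aug ≫ f ∧
      ∀ n i, i ≤ n + 1 → fn (n + 1) ≫ A.d n i = P.d n i ≫ fn n := by
  refine ⟨fun n => (seq P A h f n).1, ?_, ?_⟩
  · exact gZero_spec P A h f
  · intro n i hi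
    exact (seq P A h f n).2.2 i hi

end Statement6
end

section
/- (Comparison Theorem, uniqueness part.) Let C be a category, P = (P_n)_{n ≥ −1} an augmented simplicial object of C with P_{−1} = X, and A = (A_n)_{n ≥ −1} an augmented simplicial object of C with A_{−1} = Y, such that for every i ≥ 0 the augmented simplicial set Hom(Pᵢ, A) is contractible and Kan. If f, g : P → A are two semi-simplicial maps both extending the same morphism X → Y (i.e., f_{−1} = g_{−1}), then f and g are simplicially homotopic. -/
/-!
The homotopy is built level by level as a prism. Over `Pₙ` its simplices `hⁿ₀, …, hⁿₙ` are
chosen one after the other in the Kan complex `Hom(Pₙ, A)`: all faces of `hⁿ_K` except the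
`(K + 1)`-st are already fixed by `fₙ`, by `hⁿ⁻¹` and by the shared face with `hⁿ_{K-1}`, so
`hⁿ_K` fills a horn; for `K = n` that face too is fixed (it is `gₙ`), and `hⁿₙ` fills a sphere.
Spheres fill in a contractible Kan complex: coning one off with the contraction gives a horn
missing face `0`, and face `0` of its filler is the required simplex. The level-`0` sphere is the
pair `(f₀, g₀)`, compatible because `f` and `g` agree on `X`. The identities among the prescribed
faces come from the simplicial identities and from the homotopy identities one level down.
-/

namespace Statement7

open CategoryTheory

variable {C : Type*} [Category C]

/-- An augmented simplicial object `A = (Aₙ)_{n ≥ -1}` in a category `C`: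
`obj n = Aₙ` for `n ≥ 0`, `pt = A₋₁`, face operators `d n i : Aₙ₊₁ ⟶ Aₙ`
(meaningful for `i ≤ n + 1`), degeneracy operators `s n i : Aₙ ⟶ Aₙ₊₁`
(meaningful for `i ≤ n`), and augmentation `aug : A₀ ⟶ A₋₁`, subject to the
simplicial identities. -/
structure AugSimp (C : Type*) [Category C] where
  obj : ℕ → C
  pt : C
  d : (n i : ℕ) → (obj (n + 1) ⟶ obj n)
  s : (n i : ℕ) → (obj n ⟶ obj (n + 1))
  aug : obj 0 ⟶ pt
  dd : ∀ n i j, i < j → j ≤ n + 2 →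
    d (n + 1) j ≫ d n i = d (n + 1) i ≫ d n (j - 1)
  daug : d 0 0 ≫ aug = d 0 1 ≫ aug
  ds_lt : ∀ n i j, i < j → j ≤ n + 1 →
    s (n + 1) j ≫ d (n + 1) i = d n i ≫ s n (j - 1)
  ds_eq : ∀ n i, i ≤ n → s n i ≫ d n i = 𝟙 (obj n)
  ds_eq' : ∀ n i, i ≤ n → s n i ≫ d n (i + 1) = 𝟙 (obj n)
  ds_gt : ∀ n i j, j + 1 < i → i ≤ n + 2 →
    s (n + 1) j ≫ d (n + 1) i = d n (i - 1) ≫ s n j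
  ss : ∀ n i j, i ≤ j → j ≤ n →
    s n j ≫ s (n + 1) i = s n i ≫ s (n + 1) (j + 1)

/-- The augmented simplicial set `Hom(P, A)` is contractible: it admits a contraction,
i.e. maps `hₙ : Hom(P, Aₙ) → Hom(P, Aₙ₊₁)` for `n ≥ -1` with `∂₀ hₙ = 1` and
`∂ᵢ hₙ = hₙ₋₁ ∂ᵢ₋₁` for `i > 0`. -/
def AugSimp.ContractibleAt (A : AugSimp C) (P : C) : Prop :=
  ∃ (hm : (P ⟶ A.pt) → (P ⟶ A.obj 0))
    (h : (n : ℕ) → (P ⟶ A.obj n) → (P ⟶ A.obj (n + 1))),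
    (∀ x : P ⟶ A.pt, hm x ≫ A.aug = x) ∧
    (∀ (n : ℕ) (x : P ⟶ A.obj n), h n x ≫ A.d n 0 = x) ∧
    (∀ x : P ⟶ A.obj 0, h 0 x ≫ A.d 0 1 = hm (x ≫ A.aug)) ∧
    (∀ (n : ℕ) (x : P ⟶ A.obj (n + 1)) (i : ℕ), 1 ≤ i → i ≤ n + 2 →
      h (n + 1) x ≫ A.d (n + 1) i = h n (x ≫ A.d n (i - 1)))

/-- The simplicial set `Hom(P, A)` is Kan: every `(n, k)`-horn has a filler.
The first clause treats horns of dimension `1`, the second those of dimension `≥ 2`. -/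
def AugSimp.KanAt (A : AugSimp C) (P : C) : Prop :=
  (∀ k, k ≤ 1 → ∀ a : ℕ → (P ⟶ A.obj 0),
    ∃ b : P ⟶ A.obj 1, ∀ i, i ≤ 1 → i ≠ k → b ≫ A.d 0 i = a i) ∧
  (∀ (n k : ℕ), k ≤ n + 2 → ∀ a : ℕ → (P ⟶ A.obj (n + 1)),
    (∀ i j, i < j → j ≤ n + 2 → i ≠ k → j ≠ k →
      a j ≫ A.d n i = a i ≫ A.d n (j - 1)) →
    ∃ b : P ⟶ A.obj (n + 2), ∀ i, i ≤ n + 2 → i ≠ k → b ≫ A.d (n + 1) i = a i)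

theorem exists_seq_of_exists_next {X : ℕ → Type*} (L : ∀ n, X n → Prop)
    (R : ∀ n, X n → X (n + 1) → Prop) (x₀ : X 0) (h₀ : L 0 x₀)
    (next : ∀ n x, L n x → ∃ y, L (n + 1) y ∧ R n x y) :
    ∃ x : ∀ n, X n, x 0 = x₀ ∧ ∀ n, L n (x n) ∧ R n (x n) (x (n + 1)) := by
  choose y hy using next
  let s : ∀ n, {x : X n // L n x} := fun n =>
    Nat.rec (motive := fun n => {x : X n // L n x}) ⟨x₀, h₀⟩
      (fun n x => ⟨y n x.1 x.2, (hy n x.1 x.2).1⟩) n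
  exact ⟨fun n => (s n).1, rfl, fun n => ⟨(s n).2, (hy n _ (s n).2).2⟩⟩

namespace AugSimp

variable {A : AugSimp C} {X : C}

theorem exists_fill_sphere_zero (hc : A.ContractibleAt X) (hk : A.KanAt X)
    (a₀ a₁ : X ⟶ A.obj 0) (ha : a₀ ≫ A.aug = a₁ ≫ A.aug) :
    ∃ b : X ⟶ A.obj 1, b ≫ A.d 0 0 = a₀ ∧ b ≫ A.d 0 1 = a₁ := by
  obtain ⟨_, c, -, hc₀, hc₁, -⟩ := hc
  obtain ⟨B, hB⟩ := hk.2 0 0 (Nat.zero_le _) (fun i => if i = 1 then c 0 a₀ else c 0 a₁) <| by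
    intro i j _ _ _ _
    obtain rfl : i = 1 := by omega
    obtain rfl : j = 2 := by omega
    simp [hc₁, ha]
  have hB₁ : B ≫ A.d 1 1 = c 0 a₀ := by simpa using hB 1 (by omega) one_ne_zero
  have hB₂ : B ≫ A.d 1 2 = c 0 a₁ := by simpa using hB 2 (by omega) two_ne_zero
  refine ⟨B ≫ A.d 1 0, ?_, ?_⟩
  · rw [Category.assoc, ← A.dd 0 0 1 one_pos le_add_self, reassoc_of% hB₁, hc₀]
  · rw [Category.assoc, ← A.dd 0 0 2 two_pos le_rfl, reassoc_of% hB₂, hc₀]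

theorem exists_fill_sphere (hc : A.ContractibleAt X) (hk : A.KanAt X) (m : ℕ)
    (a : ℕ → (X ⟶ A.obj (m + 1)))
    (ha : ∀ i j, i < j → j ≤ m + 2 → a j ≫ A.d m i = a i ≫ A.d m (j - 1)) :
    ∃ b : X ⟶ A.obj (m + 2), ∀ i, i ≤ m + 2 → b ≫ A.d (m + 1) i = a i := by
  obtain ⟨-, c, -, hc₀, -, hc⟩ := hc
  obtain ⟨B, hB⟩ := hk.2 (m + 1) 0 (Nat.zero_le _) (fun i => c (m + 1) (a (i - 1))) <| by
    intro i j hij hj hi _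
    rw [hc m _ i (by omega) (by omega), hc m _ (j - 1) (by omega) (by omega),
      ha (i - 1) (j - 1) (by omega) (by omega)]
  refine ⟨B ≫ A.d (m + 2) 0, fun i hi => ?_⟩
  have hface : A.d (m + 2) (i + 1) ≫ A.d (m + 1) 0 = A.d (m + 2) 0 ≫ A.d (m + 1) i := by
    simpa using A.dd (m + 1) 0 (i + 1) (Nat.succ_pos i) (by omega)
  rw [Category.assoc, ← hface, reassoc_of% (hB (i + 1) (by omega) (Nat.succ_ne_zero i)), hc₀,
    Nat.add_sub_cancel]

end AugSimp

section Homotopy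

variable (P A : AugSimp C) (fn gn : ∀ n : ℕ, P.obj n ⟶ A.obj n)

structure IsHomotopyLevel (n : ℕ) (h : ℕ → (P.obj n ⟶ A.obj (n + 1))) : Prop where
  first : h 0 ≫ A.d n 0 = fn n
  last : h n ≫ A.d n (n + 1) = gn n
  diag : ∀ i, 1 ≤ i → i ≤ n → h i ≫ A.d n i = h (i - 1) ≫ A.d n i

structure HomotopyFacesMatch (n : ℕ) (p : ℕ → (P.obj n ⟶ A.obj (n + 1)))
    (q : ℕ → (P.obj (n + 1) ⟶ A.obj (n + 2))) : Prop where
  lt : ∀ i j, i < j → j ≤ n + 1 → q j ≫ A.d (n + 1) i = P.d n i ≫ p (j - 1)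
  gt : ∀ i j, j + 1 < i → i ≤ n + 2 → j ≤ n + 1 →
    q j ≫ A.d (n + 1) i = P.d n (i - 1) ≫ p j

/-- The composites `P.d n j ≫ q J` are the faces of the next level of the prism that come from
`q`; these identities between them make the horns of that level compatible. -/
structure FacesCompatible (n : ℕ) (q : ℕ → (P.obj n ⟶ A.obj (n + 1))) : Prop where
  low : ∀ i j J, i < j → j ≤ J → J ≤ n →
    (P.d n j ≫ q J) ≫ A.d n i = (P.d n i ≫ q J) ≫ A.d n (j - 1)
  mid : ∀ i j J, i ≤ J → J + 1 < j → j ≤ n + 1 →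
    (P.d n j ≫ q (J + 1)) ≫ A.d n i = (P.d n i ≫ q J) ≫ A.d n j
  high : ∀ i j K, K + 1 < i → i < j → j ≤ n + 2 →
    (P.d n (j - 1) ≫ q K) ≫ A.d n i = (P.d n (i - 1) ≫ q K) ≫ A.d n (j - 1)

variable {P A}

theorem facesCompatible_zero (q : ℕ → (P.obj 0 ⟶ A.obj 1)) : FacesCompatible P A 0 q where
  low _ _ _ _ _ _ := by omega
  mid _ _ _ _ _ _ := by omega
  high _ _ _ _ _ _ := by omega

theorem HomotopyFacesMatch.facesCompatible {n : ℕ} {p : ℕ → (P.obj n ⟶ A.obj (n + 1))}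
    {q : ℕ → (P.obj (n + 1) ⟶ A.obj (n + 2))} (h : HomotopyFacesMatch P A n p q) :
    FacesCompatible P A (n + 1) q where
  low i j J hij hjJ hJ := by
    rw [Category.assoc, Category.assoc, h.lt i J (by omega) hJ, h.lt (j - 1) J (by omega) hJ,
      reassoc_of% (P.dd n i j hij (by omega))]
  mid i j J hiJ hJj hj := by
    rw [Category.assoc, Category.assoc, h.lt i (J + 1) (by omega) (by omega),
      h.gt j J hJj hj (by omega), Nat.add_sub_cancel, reassoc_of% (P.dd n i j (by omega) hj)]
  high i j K hKi hij hj := by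
    rw [Category.assoc, Category.assoc, h.gt i K hKi (by omega) (by omega),
      h.gt (j - 1) K (by omega) (by omega) (by omega),
      reassoc_of% (P.dd n (i - 1) (j - 1) (by omega) (by omega))]

end Homotopy

section Prism

variable {P A : AugSimp C} (gn : ∀ n : ℕ, P.obj n ⟶ A.obj n) {n : ℕ}
  (q : ℕ → (P.obj n ⟶ A.obj (n + 1)))

/-- The faces prescribed for the `K`-th simplex `r : Pₙ₊₁ ⟶ Aₙ₊₂` of the prism over `Pₙ₊₁`, whose
`K`-th face `e` is shared with the previous simplex. Face `K + 1` is free (a horn) unless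
`K = n + 1`, where it is `gₙ₊₁` and the faces form a sphere. -/
def prismFace (K : ℕ) (e : P.obj (n + 1) ⟶ A.obj (n + 1)) (i : ℕ) :
    P.obj (n + 1) ⟶ A.obj (n + 1) :=
  if i < K then P.d n i ≫ q (K - 1)
  else if i = K then e
  else if i = K + 1 then gn (n + 1)
  else P.d n (i - 1) ≫ q K

variable {K i : ℕ} (e : P.obj (n + 1) ⟶ A.obj (n + 1))

theorem prismFace_of_lt (h : i < K) : prismFace gn q K e i = P.d n i ≫ q (K - 1) :=
  if_pos h

theorem prismFace_self : prismFace gn q K e K = e := by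
  simp [prismFace]

theorem prismFace_succ_self : prismFace gn q K e (K + 1) = gn (n + 1) := by
  simp [prismFace]

theorem prismFace_of_succ_lt (h : K + 1 < i) : prismFace gn q K e i = P.d n (i - 1) ≫ q K := by
  simp [prismFace, show ¬i < K by omega, show i ≠ K by omega, show i ≠ K + 1 by omega]

/-- The conditions on the shared face `e` under which `prismFace gn q K e` is a compatible horn
(a sphere when `K = n + 1`). -/
structure IsPrismFace (K : ℕ) (e : P.obj (n + 1) ⟶ A.obj (n + 1)) : Prop where
  lower : ∀ i, i < K → e ≫ A.d n i = P.d n i ≫ q (K - 1) ≫ A.d n (K - 1)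
  upper : K ≤ n → ∀ j, K ≤ j → j ≤ n + 1 → e ≫ A.d n j = P.d n j ≫ q K ≫ A.d n K
  top : K = n + 1 → e ≫ A.d n K = gn (n + 1) ≫ A.d n K

def IsPrismSimplex (K : ℕ) (e : P.obj (n + 1) ⟶ A.obj (n + 1))
    (r : P.obj (n + 1) ⟶ A.obj (n + 2)) : Prop :=
  ∀ i, i ≤ n + 2 → (K ≤ n → i ≠ K + 1) → r ≫ A.d (n + 1) i = prismFace gn q K e i

variable {gn q e}

theorem IsPrismFace.prismFace_compat
    (hg : ∀ n i, i ≤ n + 1 → gn (n + 1) ≫ A.d n i = P.d n i ≫ gn n)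
    (hlast : q n ≫ A.d n (n + 1) = gn n) (hc : FacesCompatible P A n q) (hK : K ≤ n + 1)
    (he : IsPrismFace gn q K e) (i j : ℕ) (hij : i < j) (hj : j ≤ n + 2)
    (hfree : K ≤ n → i ≠ K + 1 ∧ j ≠ K + 1) :
    prismFace gn q K e j ≫ A.d n i = prismFace gn q K e i ≫ A.d n (j - 1) := by
  rcases lt_trichotomy j K with hjK | rfl | hKj
  · rw [prismFace_of_lt _ _ _ hjK, prismFace_of_lt _ _ _ (hij.trans hjK)]
    exact hc.low i j (K - 1) hij (by omega) (by omega)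
  · rw [prismFace_self, prismFace_of_lt _ _ _ hij, Category.assoc]
    exact he.lower i hij
  rcases (show K + 1 ≤ j by omega).eq_or_lt with rfl | hKj
  · obtain rfl : K = n + 1 := by omega
    rw [prismFace_succ_self, Nat.add_sub_cancel]
    rcases (Nat.lt_succ_iff.mp hij).lt_or_eq with hiK | rfl
    · rw [prismFace_of_lt _ _ _ hiK, hg n i (by omega), Category.assoc, Nat.add_sub_cancel, hlast]
    · rw [prismFace_self, he.top rfl]
  rw [prismFace_of_succ_lt _ _ _ hKj]
  rcases lt_trichotomy i K with hiK | rfl | hKi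
  · obtain ⟨J, rfl⟩ : ∃ J, K = J + 1 := ⟨K - 1, by omega⟩
    rw [prismFace_of_lt _ _ _ hiK, Nat.add_sub_cancel]
    exact hc.mid i (j - 1) J (by omega) (by omega) (by omega)
  · rw [prismFace_self, Category.assoc, he.upper (by omega) (j - 1) (by omega) (by omega)]
  · have hKi : K + 1 < i := by have := (hfree (by omega)).1; omega
    rw [prismFace_of_succ_lt _ _ _ hKi]
    exact hc.high i j K hKi hij hj

theorem IsPrismFace.exists_isPrismSimplex (hX : A.ContractibleAt (P.obj (n + 1)))
    (hk : A.KanAt (P.obj (n + 1)))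
    (hg : ∀ n i, i ≤ n + 1 → gn (n + 1) ≫ A.d n i = P.d n i ≫ gn n)
    (hlast : q n ≫ A.d n (n + 1) = gn n) (hc : FacesCompatible P A n q) (hK : K ≤ n + 1)
    (he : IsPrismFace gn q K e) : ∃ r, IsPrismSimplex gn q K e r := by
  have compat := he.prismFace_compat hg hlast hc hK
  by_cases hKn : K ≤ n
  · obtain ⟨r, hr⟩ := hk.2 n (K + 1) (by omega) (prismFace gn q K e)
      fun i j hij hj hi hj' => compat i j hij hj fun _ => ⟨hi, hj'⟩
    exact ⟨r, fun i hi hfree => hr i hi (hfree hKn)⟩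
  · obtain ⟨r, hr⟩ := A.exists_fill_sphere hX hk n (prismFace gn q K e)
      fun i j hij hj => compat i j hij hj (absurd · hKn)
    exact ⟨r, fun i hi _ => hr i hi⟩

theorem isPrismFace_zero {fn : ∀ n : ℕ, P.obj n ⟶ A.obj n}
    (hf : ∀ n i, i ≤ n + 1 → fn (n + 1) ≫ A.d n i = P.d n i ≫ fn n)
    (hfirst : q 0 ≫ A.d n 0 = fn n) : IsPrismFace gn q 0 (fn (n + 1)) where
  lower _ h := absurd h (Nat.not_lt_zero _)
  upper _ j _ hj := by rw [hf n j hj, hfirst]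
  top h := absurd h (Nat.succ_ne_zero n).symm

theorem IsPrismFace.succ (hg : ∀ n i, i ≤ n + 1 → gn (n + 1) ≫ A.d n i = P.d n i ≫ gn n)
    (hlast : q n ≫ A.d n (n + 1) = gn n)
    (hdiag : ∀ i, 1 ≤ i → i ≤ n → q i ≫ A.d n i = q (i - 1) ≫ A.d n i)
    {r : P.obj (n + 1) ⟶ A.obj (n + 2)} (hK : K ≤ n) (he : IsPrismFace gn q K e)
    (hr : IsPrismSimplex gn q K e r) : IsPrismFace gn q (K + 1) (r ≫ A.d (n + 1) (K + 1)) where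
  lower i hi := by
    rw [Category.assoc, A.dd n i (K + 1) hi (by omega), ← Category.assoc, Nat.add_sub_cancel]
    rcases (Nat.lt_succ_iff.mp hi).lt_or_eq with hiK | rfl
    · rw [hr i (by omega) (by omega), prismFace_of_lt _ _ _ hiK, Category.assoc,
        hdiag K (by omega) hK]
    · rw [hr i (by omega) (by omega), prismFace_self, he.upper hK i le_rfl (by omega)]
  upper hKn j hj hjn := by
    have hface : A.d (n + 1) (j + 1) ≫ A.d n (K + 1) = A.d (n + 1) (K + 1) ≫ A.d n j := by
      simpa using A.dd n (K + 1) (j + 1) (by omega) (by omega)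
    rw [Category.assoc, ← hface, ← Category.assoc, hr (j + 1) (by omega) (by omega),
      prismFace_of_succ_lt _ _ _ (by omega), Nat.add_sub_cancel, Category.assoc,
      hdiag (K + 1) (by omega) hKn, Nat.add_sub_cancel]
  top h := by
    obtain rfl : n = K := by omega
    have hface : A.d (n + 1) (n + 2) ≫ A.d n (n + 1) = A.d (n + 1) (n + 1) ≫ A.d n (n + 1) :=
      A.dd n (n + 1) (n + 2) (by omega) le_rfl
    rw [Category.assoc, ← hface, ← Category.assoc,
      hr (n + 2) le_rfl (by omega), prismFace_of_succ_lt _ _ _ (by omega), hg n (n + 1) le_rfl]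
    simp [hlast]

end Prism

section

variable {P A : AugSimp C} {fn gn : ∀ n : ℕ, P.obj n ⟶ A.obj n}

theorem exists_prism {n : ℕ} {q : ℕ → (P.obj n ⟶ A.obj (n + 1))}
    (hf : ∀ n i, i ≤ n + 1 → fn (n + 1) ≫ A.d n i = P.d n i ≫ fn n)
    (hg : ∀ n i, i ≤ n + 1 → gn (n + 1) ≫ A.d n i = P.d n i ≫ gn n)
    (hX : A.ContractibleAt (P.obj (n + 1))) (hk : A.KanAt (P.obj (n + 1)))
    (hq : IsHomotopyLevel P A fn gn n q) (hc : FacesCompatible P A n q) :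
    ∃ r : ℕ → (P.obj (n + 1) ⟶ A.obj (n + 2)),
      r 0 ≫ A.d (n + 1) 0 = fn (n + 1) ∧
      (∀ K, K ≤ n + 1 → ∃ e, IsPrismSimplex gn q K e (r K)) ∧
      ∀ K, r (K + 1) ≫ A.d (n + 1) (K + 1) = r K ≫ A.d (n + 1) (K + 1) := by
  have fill := fun K e => IsPrismFace.exists_isPrismSimplex (K := K) (e := e) hX hk hg hq.last hc
  have he₀ : IsPrismFace gn q 0 (fn (n + 1)) := isPrismFace_zero hf hq.first
  obtain ⟨r₀, hr₀⟩ := fill 0 _ (Nat.zero_le _) he₀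
  obtain ⟨r, rfl, hr⟩ := exists_seq_of_exists_next (X := fun _ => P.obj (n + 1) ⟶ A.obj (n + 2))
    (fun K x => K ≤ n + 1 → ∃ e, IsPrismFace gn q K e ∧ IsPrismSimplex gn q K e x)
    (fun K x y => y ≫ A.d (n + 1) (K + 1) = x ≫ A.d (n + 1) (K + 1))
    r₀ (fun _ => ⟨_, he₀, hr₀⟩) <| by
      intro K x hx
      by_cases hK : K ≤ n
      · obtain ⟨e, he, hxe⟩ := hx (by omega)
        have he' := he.succ hg hq.last hq.diag hK hxe
        obtain ⟨y, hy⟩ := fill (K + 1) _ (by omega) he'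
        exact ⟨y, fun _ => ⟨_, he', hy⟩,
          (hy (K + 1) (by omega) (by omega)).trans (prismFace_self _ _ _)⟩
      · exact ⟨x, fun h => absurd h (by omega), rfl⟩
  refine ⟨r, ?_, fun K hK => ?_, fun K => (hr K).2⟩
  · rw [hr₀ 0 (Nat.zero_le _) (by omega), prismFace_self]
  · obtain ⟨e, -, he⟩ := (hr K).1 hK
    exact ⟨e, he⟩

theorem exists_next_level {n : ℕ} {q : ℕ → (P.obj n ⟶ A.obj (n + 1))}
    (hf : ∀ n i, i ≤ n + 1 → fn (n + 1) ≫ A.d n i = P.d n i ≫ fn n)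
    (hg : ∀ n i, i ≤ n + 1 → gn (n + 1) ≫ A.d n i = P.d n i ≫ gn n)
    (hX : A.ContractibleAt (P.obj (n + 1))) (hk : A.KanAt (P.obj (n + 1)))
    (hq : IsHomotopyLevel P A fn gn n q) (hc : FacesCompatible P A n q) :
    ∃ r, IsHomotopyLevel P A fn gn (n + 1) r ∧ HomotopyFacesMatch P A n q r := by
  obtain ⟨r, hfirst, hprism, hdiag⟩ := exists_prism hf hg hX hk hq hc
  refine ⟨r, ⟨hfirst, ?_, fun i hi _ => ?_⟩, ⟨fun i j hij hj => ?_, fun i j hji hi hj => ?_⟩⟩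
  · obtain ⟨e, he⟩ := hprism (n + 1) le_rfl
    rw [he (n + 2) le_rfl (by omega), prismFace_succ_self]
  · obtain ⟨K, rfl⟩ : ∃ K, i = K + 1 := ⟨i - 1, by omega⟩
    exact hdiag K
  · obtain ⟨e, he⟩ := hprism j hj
    rw [he i (by omega) (by omega), prismFace_of_lt _ _ _ hij]
  · obtain ⟨e, he⟩ := hprism j hj
    rw [he i hi (by omega), prismFace_of_succ_lt _ _ _ hji]

end

/-- Comparison Theorem, uniqueness part.  With `P`, `A` as in the
Comparison Theorem, any two semi-simplicial maps `f, g : P ⟶ A` extending the same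
morphism `X ⟶ Y` are simplicially homotopic: there is a family
`hⁿᵢ : Pₙ ⟶ Aₙ₊₁` (for `0 ≤ i ≤ n`) with `∂₀ hⁿ₀ = fₙ`, `∂ₙ₊₁ hⁿₙ = gₙ`,
`∂ᵢ hⁿⱼ = hⁿ⁻¹ⱼ₋₁ ∂ᵢ` for `i < j`, `∂ᵢ hⁿᵢ = ∂ᵢ hⁿᵢ₋₁` for `i = j ≠ 0`, and
`∂ᵢ hⁿⱼ = hⁿ⁻¹ⱼ ∂ᵢ₋₁` for `i > j + 1`. -/
theorem statement7 (P A : AugSimp C)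
    (hPA : ∀ i : ℕ, A.ContractibleAt (P.obj i) ∧ A.KanAt (P.obj i))
    (ff : P.pt ⟶ A.pt)
    (fn gn : ∀ n : ℕ, P.obj n ⟶ A.obj n)
    (hf0 : fn 0 ≫ A.aug = P.aug ≫ ff)
    (hf : ∀ n i, i ≤ n + 1 → fn (n + 1) ≫ A.d n i = P.d n i ≫ fn n)
    (hg0 : gn 0 ≫ A.aug = P.aug ≫ ff)
    (hg : ∀ n i, i ≤ n + 1 → gn (n + 1) ≫ A.d n i = P.d n i ≫ gn n) :
    ∃ h : (n i : ℕ) → (P.obj n ⟶ A.obj (n + 1)),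
      (∀ n, h n 0 ≫ A.d n 0 = fn n) ∧
      (∀ n, h n n ≫ A.d n (n + 1) = gn n) ∧
      (∀ n i j, i < j → j ≤ n + 1 →
        h (n + 1) j ≫ A.d (n + 1) i = P.d n i ≫ h n (j - 1)) ∧
      (∀ n i, 1 ≤ i → i ≤ n →
        h n i ≫ A.d n i = h n (i - 1) ≫ A.d n i) ∧
      (∀ n i j, j + 1 < i → i ≤ n + 2 → j ≤ n + 1 →
        h (n + 1) j ≫ A.d (n + 1) i = P.d n (i - 1) ≫ h n j) := by
  obtain ⟨b, hb₀, hb₁⟩ :=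
    A.exists_fill_sphere_zero (hPA 0).1 (hPA 0).2 (fn 0) (gn 0) (by rw [hf0, hg0])
  have base : IsHomotopyLevel P A fn gn 0 (fun _ => b) :=
    ⟨hb₀, hb₁, fun _ h₁ h₀ => absurd (h₁.trans h₀) (by omega)⟩
  obtain ⟨h, -, hh⟩ := exists_seq_of_exists_next
    (fun n q => IsHomotopyLevel P A fn gn n q ∧ FacesCompatible P A n q)
    (HomotopyFacesMatch P A) (fun _ => b) ⟨base, facesCompatible_zero _⟩
    fun n _ ⟨hq, hc⟩ => by
      obtain ⟨r, hr, hqr⟩ := exists_next_level hf hg (hPA (n + 1)).1 (hPA (n + 1)).2 hq hc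
      exact ⟨r, ⟨hr, hqr.facesCompatible⟩, hqr⟩
  exact ⟨h, fun n => (hh n).1.1.first, fun n => (hh n).1.1.last, fun n => (hh n).2.lt,
    fun n => (hh n).1.1.diag, fun n => (hh n).2.gt⟩

end Statement7
end

section
/- Let 𝔾 = (G, ε, δ) and 𝕂 = (K, ε', δ') be two comonads on a category C which generate the same projective class 𝒫 (i.e., a morphism e of C is GY-epic for all objects Y if and only if it is KY-epic for all objects Y, and 𝒫 is the common class of projectives), and suppose this projective class is Kan in the sense that for every object X and every P ∈ 𝒫 the augmented simplicial sets Hom(P, 𝔾X) and Hom(P, 𝕂X) are Kan. Then for every object X the augmented simplicial objects 𝔾X and 𝕂X are homotopically equivalent: there exist semi-simplicial maps f : 𝔾X → 𝕂X and g : 𝕂X → 𝔾X commuting with the identity on X such that g ∘ f is simplicially homotopic to the identity on 𝔾X and f ∘ g is simplicially homotopic to the identity on 𝕂X. -/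
open CategoryTheory
namespace Statement8

variable {C : Type*} [Category C]

/-- Iterated application of the comonad functor: `iterObj G X n = GⁿX`. -/
def iterObj (G : Comonad C) (X : C) : ℕ → C
  | 0 => X
  | n + 1 => G.obj (iterObj G X n)

/-- Face operators of the comonad resolution `𝔾X`:
`face G X n i : Gⁿ⁺¹X ⟶ GⁿX` is `∂ᵢ = Gⁱ ε_{Gⁿ⁻ⁱX}` (meaningful for `i ≤ n`);
`face G X 0 0 = ε_X` is the augmentation. -/
def face (G : Comonad C) (X : C) : (n i : ℕ) → (iterObj G X (n + 1) ⟶ iterObj G X n)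
  | n, 0 => G.ε.app (iterObj G X n)
  | 0, _ + 1 => G.ε.app X
  | n + 1, i + 1 => G.toFunctor.map (face G X n i)

/-- A morphism `e : A ⟶ B` belongs to the class `E_𝔾` generated by the comonad `G`:
every morphism `GY ⟶ B` factors through `e`. -/
def inE (G : Comonad C) {A B : C} (e : A ⟶ B) : Prop :=
  ∀ (Y : C) (g : G.obj Y ⟶ B), ∃ h : G.obj Y ⟶ A, h ≫ e = g

/-- `P` belongs to the projective class generated by the comonad `G`:
`P` is `E_𝔾`-projective. -/
def isProj (G : Comonad C) (P : C) : Prop :=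
  ∀ {A B : C} (e : A ⟶ B), inE G e → ∀ g : P ⟶ B, ∃ h : P ⟶ A, h ≫ e = g

/-- The simplicial set `Hom(P, (obj, d))` is Kan: every `(n, k)`-horn has a filler.
Here `obj n` is the object of `n`-simplices and `d n i : obj (n+1) ⟶ obj n` the face
operators (meaningful for `i ≤ n + 1`).  The first clause treats horns of dimension `1`,
the second those of dimension `≥ 2`. -/
def KanRaw (obj : ℕ → C) (d : (n i : ℕ) → (obj (n + 1) ⟶ obj n)) (P : C) : Prop :=
  (∀ k, k ≤ 1 → ∀ a : ℕ → (P ⟶ obj 0),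
    ∃ b : P ⟶ obj 1, ∀ i, i ≤ 1 → i ≠ k → b ≫ d 0 i = a i) ∧
  (∀ (n k : ℕ), k ≤ n + 2 → ∀ a : ℕ → (P ⟶ obj (n + 1)),
    (∀ i j, i < j → j ≤ n + 2 → i ≠ k → j ≠ k →
      a j ≫ d n i = a i ≫ d n (j - 1)) →
    ∃ b : P ⟶ obj (n + 2), ∀ i, i ≤ n + 2 → i ≠ k → b ≫ d (n + 1) i = a i)

/-- A simplicial homotopy between semi-simplicial maps `f, g : (objB, dB) ⟶ (objA, dA)`:
a family `hⁿᵢ : Bₙ ⟶ Aₙ₊₁` (for `0 ≤ i ≤ n`) with `∂₀ hⁿ₀ = fₙ`, `∂ₙ₊₁ hⁿₙ = gₙ`,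
`∂ᵢ hⁿⱼ = hⁿ⁻¹ⱼ₋₁ ∂ᵢ` for `i < j`, `∂ᵢ hⁿᵢ = ∂ᵢ hⁿᵢ₋₁` for `i = j ≠ 0`, and
`∂ᵢ hⁿⱼ = hⁿ⁻¹ⱼ ∂ᵢ₋₁` for `i > j + 1`. -/
def Homot (objB objA : ℕ → C)
    (dB : (n i : ℕ) → (objB (n + 1) ⟶ objB n))
    (dA : (n i : ℕ) → (objA (n + 1) ⟶ objA n))
    (f g : ∀ n, objB n ⟶ objA n) : Prop :=
  ∃ h : (n i : ℕ) → (objB n ⟶ objA (n + 1)),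
    (∀ n, h n 0 ≫ dA n 0 = f n) ∧
    (∀ n, h n n ≫ dA n (n + 1) = g n) ∧
    (∀ n i j, i < j → j ≤ n + 1 →
      h (n + 1) j ≫ dA (n + 1) i = dB n i ≫ h n (j - 1)) ∧
    (∀ n i, 1 ≤ i → i ≤ n →
      h n i ≫ dA n i = h n (i - 1) ≫ dA n i) ∧
    (∀ n i j, j + 1 < i → i ≤ n + 2 → j ≤ n + 1 →
      h (n + 1) j ≫ dA (n + 1) i = dB n (i - 1) ≫ h n j)

/-! For a projective `P` the counit of either comonad splits at `P`, and a splitting `r` gives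
`Hom(P, 𝕂X)` the extra degeneracy `x ↦ r ≫ K x`.  With the Kan condition this fills every
sphere: fill the `0`-horn whose faces are the cones on the given faces, then take its `0`-th face.
As every `Gⁿ⁺¹X` and `Kⁿ⁺¹X` is projective, the comparison maps are built degreewise as sphere
fillers.  A homotopy between two augmented semi-simplicial maps into a resolution is built one
component `hⁿⱼ` at a time, each a filler of a horn whose faces are prescribed by the components
already built, the last one of each degree a filler of a sphere. -/

theorem exists_seq_of_step {α : ℕ → Sort*} (P : ∀ n, α n → Prop)
    (R : ∀ n, α n → α (n + 1) → Prop) (a₀ : α 0) (h₀ : P 0 a₀)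
    (step : ∀ n a, P n a → ∃ b, P (n + 1) b ∧ R n a b) :
    ∃ x : ∀ n, α n, x 0 = a₀ ∧ ∀ n, P n (x n) ∧ R n (x n) (x (n + 1)) := by
  choose next hnext using step
  let y : ∀ n, {a // P n a} := fun n =>
    Nat.rec (motive := fun n => {a // P n a}) ⟨a₀, h₀⟩
      (fun n y => ⟨next n y.1 y.2, (hnext n y.1 y.2).1⟩) n
  exact ⟨fun n => (y n).1, rfl, fun n => ⟨(y n).2, (hnext n (y n).1 (y n).2).2⟩⟩

section SemiSimplicial

/- Augmented indexing: `A 0` is the augmentation and `d n i : A (n + 1) ⟶ A n`, so that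
`A = iterObj G X` and `d = face G X` is the resolution `𝔾X`. -/
variable {A : ℕ → C} (d : (n i : ℕ) → (A (n + 1) ⟶ A n))

def FaceIdentities : Prop :=
  ∀ n i j, i < j → j ≤ n + 2 → d (n + 1) j ≫ d n i = d (n + 1) i ≫ d n (j - 1)

def IsSphere {P : C} (n : ℕ) (a : ℕ → (P ⟶ A (n + 1))) : Prop :=
  ∀ i j, i < j → j ≤ n + 1 → a j ≫ d n i = a i ≫ d n (j - 1)

def HasSphereFillers (P : C) : Prop :=
  (∀ a : P ⟶ A 0, ∃ b : P ⟶ A 1, b ≫ d 0 0 = a) ∧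
  ∀ n (a : ℕ → (P ⟶ A (n + 1))), IsSphere d n a →
    ∃ b : P ⟶ A (n + 2), ∀ i ≤ n + 1, b ≫ d (n + 1) i = a i

variable {d}

theorem FaceIdentities.face_succ (hd : FaceIdentities d) {n i j : ℕ} (hij : i ≤ j)
    (hj : j ≤ n + 1) : d (n + 1) (j + 1) ≫ d n i = d (n + 1) i ≫ d n j :=
  hd n i (j + 1) (by omega) (by omega)

end SemiSimplicial

section Maps

variable {A B E : ℕ → C} (dB : (n i : ℕ) → (B (n + 1) ⟶ B n))
  (dA : (n i : ℕ) → (A (n + 1) ⟶ A n)) (dE : (n i : ℕ) → (E (n + 1) ⟶ E n))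

def IsSemiSimplicialMap (f : ∀ n, B (n + 1) ⟶ A (n + 1)) : Prop :=
  ∀ n i, i ≤ n + 1 → f (n + 1) ≫ dA (n + 1) i = dB (n + 1) i ≫ f n

theorem isSemiSimplicialMap_id : IsSemiSimplicialMap dA dA (fun n => 𝟙 (A (n + 1))) := by
  intro n i _
  simp

variable {dA dB dE}

theorem IsSemiSimplicialMap.comp {f : ∀ n, B (n + 1) ⟶ A (n + 1)} {g : ∀ n, A (n + 1) ⟶ E (n + 1)}
    (hf : IsSemiSimplicialMap dB dA f) (hg : IsSemiSimplicialMap dA dE g) :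
    IsSemiSimplicialMap dB dE (fun n => f n ≫ g n) := by
  intro n i hi
  rw [Category.assoc, hg n i hi, ← Category.assoc, hf n i hi, Category.assoc]

end Maps

section Resolution

variable (T : Comonad C) (X : C)

theorem face_zero (n : ℕ) : face T X n 0 = T.ε.app (iterObj T X n) := by
  cases n <;> rfl

theorem face_zero_left (i : ℕ) : face T X 0 i = T.ε.app X := by
  cases i <;> rfl

theorem face_succ_succ (n i : ℕ) : face T X (n + 1) (i + 1) = T.map (face T X n i) := rfl

theorem face_comp_face : ∀ (n : ℕ) {i j : ℕ}, i < j →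
    face T X (n + 1) j ≫ face T X n i = face T X (n + 1) i ≫ face T X n (j - 1)
  | n, 0, j + 1, _ => by
    rw [face_zero, face_zero, face_succ_succ, Nat.add_sub_cancel]
    exact T.ε.naturality _
  | 0, i + 1, j + 1, _ => by
    simp only [face_succ_succ, face_zero_left]
  | n + 1, i + 1, j + 1, h => by
    obtain ⟨j, rfl⟩ : ∃ k, j = k + 1 := ⟨j - 1, by omega⟩
    show T.map (face T X (n + 1) (j + 1)) ≫ T.map (face T X n i) =
      T.map (face T X (n + 1) i) ≫ T.map (face T X n j)
    rw [← Functor.map_comp, ← Functor.map_comp, face_comp_face n (by omega : i < j + 1),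
      Nat.add_sub_cancel]

theorem faceIdentities_face : FaceIdentities (face T X) :=
  fun n _ _ hij _ => face_comp_face T X n hij

theorem inE_counit (Z : C) : inE T (T.ε.app Z) :=
  fun Y g => ⟨T.δ.app Y ≫ T.map g, by simp⟩

theorem isProj_obj (Z : C) : isProj T (T.obj Z) :=
  fun _ he g => he Z g

variable {T X}

theorem isProj_congr {S : Comonad C} (h : ∀ {A B : C} (e : A ⟶ B), inE T e ↔ inE S e)
    (P : C) : isProj T P ↔ isProj S P :=
  ⟨fun hP _ _ e he => hP e ((h e).2 he), fun hP _ _ e he => hP e ((h e).1 he)⟩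

variable {P : C} {r : P ⟶ T.obj P}

theorem section_map_comp_face_zero (hr : r ≫ T.ε.app P = 𝟙 P) {n : ℕ}
    (x : P ⟶ iterObj T X n) : (r ≫ T.map x) ≫ face T X n 0 = x := by
  have hnat : T.map x ≫ T.ε.app (iterObj T X n) = T.ε.app P ≫ x := T.ε.naturality x
  rw [face_zero, Category.assoc, hnat, ← Category.assoc, hr, Category.id_comp]

theorem section_map_comp_face_succ {n i : ℕ} (x : P ⟶ iterObj T X (n + 1)) :
    (r ≫ T.map x : P ⟶ iterObj T X (n + 2)) ≫ face T X (n + 1) (i + 1) =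
      (r ≫ T.map (x ≫ face T X n i) : P ⟶ iterObj T X (n + 1)) := by
  rw [Functor.map_comp]
  exact Category.assoc r (T.map x) (T.map (face T X n i))

theorem hasSphereFillers_of_kan (hP : isProj T P)
    (hkan : KanRaw (fun n => iterObj T X (n + 1)) (fun n i => face T X (n + 1) i) P) :
    HasSphereFillers (face T X) P := by
  obtain ⟨r, hr⟩ : ∃ r : P ⟶ T.obj P, r ≫ T.ε.app P = 𝟙 P := hP _ (inE_counit T P) (𝟙 P)
  refine ⟨fun a => ⟨r ≫ T.map a, section_map_comp_face_zero hr a⟩, fun n a ha => ?_⟩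
  obtain ⟨u, hu⟩ := hkan.2 n 0 (Nat.zero_le _) (fun i => r ≫ T.map (a (i - 1))) (by
    intro i j hij hj hi hj'
    obtain ⟨i, rfl⟩ : ∃ k, i = k + 1 := ⟨i - 1, by omega⟩
    obtain ⟨j, rfl⟩ : ∃ k, j = k + 1 + 1 := ⟨j - 2, by omega⟩
    simp only [Nat.add_sub_cancel]
    rw [section_map_comp_face_succ, section_map_comp_face_succ,
      ha i (j + 1) (by omega) (by omega), Nat.add_sub_cancel])
  refine ⟨u ≫ face T X (n + 2) 0, fun i hi => ?_⟩
  have hface := face_comp_face T X (n + 1) (by omega : 0 < i + 1)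
  rw [Nat.add_sub_cancel] at hface
  rw [Category.assoc, ← hface, ← Category.assoc, hu (i + 1) (by omega) (by omega)]
  exact section_map_comp_face_zero hr (a i)

end Resolution

section Lift

variable {A B : ℕ → C} {dA : (n i : ℕ) → (A (n + 1) ⟶ A n)}
  {dB : (n i : ℕ) → (B (n + 1) ⟶ B n)}

theorem isSphere_face_comp (hB : FaceIdentities dB) {n : ℕ} {a : B n ⟶ A n}
    {b : B (n + 1) ⟶ A (n + 1)} (hab : ∀ i ≤ n, b ≫ dA n i = dB n i ≫ a) :
    IsSphere dA n (fun i => dB (n + 1) i ≫ b) := by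
  intro i j hij hj
  simp only [Category.assoc, hab i (by omega), hab (j - 1) (by omega)]
  rw [← Category.assoc, ← Category.assoc, hB n i j hij (by omega)]

theorem exists_semiSimplicial_lift (hB : FaceIdentities dB)
    (hfill : ∀ n, HasSphereFillers dA (B (n + 1))) (φ : B 0 ⟶ A 0) :
    ∃ f : ∀ n, B (n + 1) ⟶ A (n + 1), f 0 ≫ dA 0 0 = dB 0 0 ≫ φ ∧
      IsSemiSimplicialMap dB dA f := by
  obtain ⟨f₀, hf₀⟩ := (hfill 0).1 (dB 0 0 ≫ φ)
  have hf₀' : ∀ i ≤ 0, f₀ ≫ dA 0 i = dB 0 i ≫ φ := by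
    intro i hi
    obtain rfl := Nat.le_zero.1 hi
    exact hf₀
  obtain ⟨f, rfl, hf⟩ := exists_seq_of_step (α := fun n => B (n + 1) ⟶ A (n + 1))
    (fun n b => IsSphere dA n (fun i => dB (n + 1) i ≫ b))
    (fun n b c => ∀ i ≤ n + 1, c ≫ dA (n + 1) i = dB (n + 1) i ≫ b) f₀
    (isSphere_face_comp hB hf₀') fun n b hb => by
      obtain ⟨c, hc⟩ := (hfill (n + 1)).2 n _ hb
      exact ⟨c, isSphere_face_comp hB hc, hc⟩
  exact ⟨f, hf₀, fun n i hi => (hf n).2 i hi⟩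

end Lift

section Homotopy

variable {A B : ℕ → C} (dA : (n i : ℕ) → (A (n + 1) ⟶ A n))
  (dB : (n i : ℕ) → (B (n + 1) ⟶ B n)) (f g : ∀ n, B (n + 1) ⟶ A (n + 1))

/- Degree `m` of a homotopy `h` from `f` to `g` passes through the maps `∂ₖ hₖ = ∂ₖ hₖ₋₁`;
`homotopyPath` lists them, starting from `f m`. -/
def homotopyPath (m : ℕ) (h : ℕ → (B (m + 1) ⟶ A (m + 2))) : ℕ → (B (m + 1) ⟶ A (m + 1))
  | 0 => f m
  | k + 1 => h k ≫ dA (m + 1) (k + 1)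

def IsHomotopyLevel (m : ℕ) (h : ℕ → (B (m + 1) ⟶ A (m + 2))) : Prop :=
  (∀ k ≤ m, h k ≫ dA (m + 1) k = homotopyPath dA f m h k) ∧ homotopyPath dA f m h (m + 1) = g m

def IsHomotopyLink (m : ℕ) (p : ℕ → (B (m + 1) ⟶ A (m + 2)))
    (q : ℕ → (B (m + 2) ⟶ A (m + 3))) : Prop :=
  (∀ i j, i < j → j ≤ m + 1 → q j ≫ dA (m + 2) i = dB (m + 1) i ≫ p (j - 1)) ∧
  ∀ i j, j + 1 < i → i ≤ m + 2 → j ≤ m + 1 → q j ≫ dA (m + 2) i = dB (m + 1) (i - 1) ≫ p j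

/- The compatibilities among the faces `dB _ ≫ h _` that the horns of degree `m + 1` inherit
from `h`.  They follow from a link with degree `m - 1` and hold vacuously in degree `0`, so they
replace that link in the induction. -/
def IsHomotopyCoherent (m : ℕ) (h : ℕ → (B (m + 1) ⟶ A (m + 2))) : Prop :=
  (∀ i i' j, i < i' → i' < j → j ≤ m + 1 →
    (dB (m + 1) i' ≫ h (j - 1)) ≫ dA (m + 1) i =
      (dB (m + 1) i ≫ h (j - 1)) ≫ dA (m + 1) (i' - 1)) ∧
  (∀ i i' j, i < j → j + 1 < i' → i' ≤ m + 2 →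
    (dB (m + 1) (i' - 1) ≫ h j) ≫ dA (m + 1) i =
      (dB (m + 1) i ≫ h (j - 1)) ≫ dA (m + 1) (i' - 1)) ∧
  ∀ i i' j, j + 1 < i → i < i' → i' ≤ m + 2 →
    (dB (m + 1) (i' - 1) ≫ h j) ≫ dA (m + 1) i = (dB (m + 1) (i - 1) ≫ h j) ≫ dA (m + 1) (i' - 1)

/- The faces prescribed for the `j`-th component of degree `m + 1`: `D` is the face it shares
with component `j - 1`, and the face `j + 1` is prescribed only for the last component. -/
def homotopyFaces (m : ℕ) (h : ℕ → (B (m + 1) ⟶ A (m + 2))) (j : ℕ) (D : B (m + 2) ⟶ A (m + 2))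
    (i : ℕ) : B (m + 2) ⟶ A (m + 2) :=
  if i < j then dB (m + 1) i ≫ h (j - 1) else if i = j then D
  else if i = j + 1 then g (m + 1) else dB (m + 1) (i - 1) ≫ h j

/- The condition on the shared face `D` of `homotopyFaces` that makes the horn compatible; it
passes from each component to the next (`HasPathFaces.succ`). -/
def HasPathFaces (m : ℕ) (h : ℕ → (B (m + 1) ⟶ A (m + 2))) (j : ℕ)
    (D : B (m + 2) ⟶ A (m + 2)) : Prop :=
  (∀ i < j, D ≫ dA (m + 1) i = dB (m + 1) i ≫ homotopyPath dA f m h (j - 1)) ∧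
  ∀ i, j ≤ i → i ≤ m + 1 → D ≫ dA (m + 1) i = dB (m + 1) i ≫ homotopyPath dA f m h j

variable {dA dB f g} {m : ℕ} {h : ℕ → (B (m + 1) ⟶ A (m + 2))} {j : ℕ}
  {D : B (m + 2) ⟶ A (m + 2)}

@[simp]
theorem homotopyPath_zero : homotopyPath dA f m h 0 = f m := rfl

@[simp]
theorem homotopyPath_succ (k : ℕ) : homotopyPath dA f m h (k + 1) = h k ≫ dA (m + 1) (k + 1) :=
  rfl

theorem homotopyPath_update {c : ℕ → (B (m + 1) ⟶ A (m + 2))} {l : ℕ} (hl : l ≤ j)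
    (c' : B (m + 1) ⟶ A (m + 2)) :
    homotopyPath dA f m (Function.update c j c') l = homotopyPath dA f m c l := by
  cases l with
  | zero => rfl
  | succ l => simp [Function.update_of_ne (by omega : l ≠ j)]

theorem homotopyFaces_of_lt {i : ℕ} (hi : i < j) :
    homotopyFaces dB g m h j D i = dB (m + 1) i ≫ h (j - 1) := by
  simp [homotopyFaces, hi]

theorem homotopyFaces_self : homotopyFaces dB g m h j D j = D := by
  simp [homotopyFaces]

theorem homotopyFaces_succ : homotopyFaces dB g m h j D (j + 1) = g (m + 1) := by
  simp [homotopyFaces]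

theorem homotopyFaces_of_gt {i : ℕ} (hi : j + 1 < i) :
    homotopyFaces dB g m h j D i = dB (m + 1) (i - 1) ≫ h j := by
  rw [homotopyFaces, if_neg (by omega), if_neg (by omega), if_neg (by omega)]

theorem IsHomotopyLink.isHomotopyCoherent (hB : FaceIdentities dB)
    {q : ℕ → (B (m + 2) ⟶ A (m + 3))} (hhq : IsHomotopyLink dA dB m h q) :
    IsHomotopyCoherent dA dB (m + 1) q := by
  obtain ⟨hlow, hup⟩ := hhq
  refine ⟨fun i i' j hii' hi'j hj => ?_, fun i i' j hij hji' hi' => ?_,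
    fun i i' j hji hii' hi' => ?_⟩
  · rw [Category.assoc, Category.assoc, hlow i (j - 1) (by omega) (by omega),
      hlow (i' - 1) (j - 1) (by omega) (by omega), ← Category.assoc, ← Category.assoc,
      hB (m + 1) i i' hii' (by omega)]
  · rw [Category.assoc, Category.assoc, hlow i j hij (by omega),
      hup (i' - 1) (j - 1) (by omega) (by omega) (by omega), ← Category.assoc,
      ← Category.assoc, hB (m + 1) i (i' - 1) (by omega) (by omega)]
  · rw [Category.assoc, Category.assoc, hup i j hji (by omega) (by omega),
      hup (i' - 1) j (by omega) (by omega) (by omega), ← Category.assoc, ← Category.assoc,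
      hB (m + 1) (i - 1) (i' - 1) (by omega) (by omega)]

theorem hasPathFaces_zero (hf : IsSemiSimplicialMap dB dA f) :
    HasPathFaces dA dB f m h 0 (f (m + 1)) :=
  ⟨fun _ hi => absurd hi (Nat.not_lt_zero _), fun i _ hi => hf m i hi⟩

theorem HasPathFaces.succ (hA : FaceIdentities dA) (hD : HasPathFaces dA dB f m h j D)
    (hj : j ≤ m) {c : B (m + 2) ⟶ A (m + 3)}
    (hc : ∀ i ≤ m + 2, i ≠ j + 1 → c ≫ dA (m + 2) i = homotopyFaces dB g m h j D i) :
    HasPathFaces dA dB f m h (j + 1) (c ≫ dA (m + 2) (j + 1)) := by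
  refine ⟨fun i hi => ?_, fun i hi hi' => ?_⟩
  · rw [Category.assoc, hA.face_succ (by omega) (by omega), ← Category.assoc,
      hc i (by omega) (by omega), Nat.add_sub_cancel]
    rcases Nat.lt_or_ge i j with hij | hij
    · obtain ⟨j, rfl⟩ : ∃ k, j = k + 1 := ⟨j - 1, by omega⟩
      rw [homotopyFaces_of_lt hij, Category.assoc, homotopyPath_succ, Nat.add_sub_cancel]
    · obtain rfl : i = j := by omega
      rw [homotopyFaces_self, hD.2 i le_rfl (by omega)]
  · rw [Category.assoc, ← hA.face_succ hi (by omega), ← Category.assoc,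
      hc (i + 1) (by omega) (by omega), homotopyFaces_of_gt (by omega), Nat.add_sub_cancel,
      Category.assoc, homotopyPath_succ]

theorem homotopyFaces_compat (hh : IsHomotopyLevel dA f g m h)
    (hcoh : IsHomotopyCoherent dA dB m h) (hD : HasPathFaces dA dB f m h j D) (hj : j ≤ m + 1)
    {i i' : ℕ} (hii' : i < i') (hi' : i' ≤ m + 2) (hi : i ≠ j + 1) (hi'j : i' ≠ j + 1) :
    homotopyFaces dB g m h j D i' ≫ dA (m + 1) i =
      homotopyFaces dB g m h j D i ≫ dA (m + 1) (i' - 1) := by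
  obtain ⟨c1, c3, c5⟩ := hcoh
  rcases lt_trichotomy i' j with h' | rfl | h'
  · rw [homotopyFaces_of_lt h', homotopyFaces_of_lt (hii'.trans h')]
    exact c1 i i' j hii' h' hj
  · rw [homotopyFaces_self, homotopyFaces_of_lt hii', hD.1 i hii', Category.assoc,
      hh.1 (i' - 1) (by omega)]
  · have h' : j + 1 < i' := by omega
    rw [homotopyFaces_of_gt h']
    rcases lt_trichotomy i j with hij | rfl | hij
    · rw [homotopyFaces_of_lt hij]
      exact c3 i i' j hij h' hi'
    · rw [homotopyFaces_self, hD.2 (i' - 1) (by omega) (by omega), Category.assoc,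
        hh.1 i (by omega)]
    · rw [homotopyFaces_of_gt (by omega)]
      exact c5 i i' j (by omega) hii' hi'

theorem isSphere_homotopyFaces
    (hg : IsSemiSimplicialMap dB dA g)
    (hh : IsHomotopyLevel dA f g m h) (hcoh : IsHomotopyCoherent dA dB m h)
    (hD : HasPathFaces dA dB f m h (m + 1) D) :
    IsSphere dA (m + 1) (homotopyFaces dB g m h (m + 1) D) := by
  intro i i' hii' hi'
  rcases Nat.lt_or_ge i' (m + 2) with h' | h'
  · exact homotopyFaces_compat hh hcoh hD le_rfl hii' hi' (by omega) (by omega)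
  obtain rfl : i' = m + 2 := by omega
  rw [homotopyFaces_succ, hg m i (by omega), show m + 2 - 1 = m + 1 from rfl]
  rcases Nat.lt_or_ge i (m + 1) with hi | hi
  · rw [homotopyFaces_of_lt hi, Nat.add_sub_cancel, Category.assoc, ← homotopyPath_succ, hh.2]
  · obtain rfl : i = m + 1 := by omega
    rw [homotopyFaces_self, hD.2 (m + 1) le_rfl le_rfl, hh.2]

theorem exists_homotopyHornFiller (hA : FaceIdentities dA)
    (hkan : KanRaw (fun n => A (n + 1)) (fun n i => dA (n + 1) i) (B (m + 2)))
    (hh : IsHomotopyLevel dA f g m h) (hcoh : IsHomotopyCoherent dA dB m h)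
    (hD : HasPathFaces dA dB f m h j D) (hj : j ≤ m) :
    ∃ c : B (m + 2) ⟶ A (m + 3),
      (∀ i ≤ m + 2, i ≠ j + 1 → c ≫ dA (m + 2) i = homotopyFaces dB g m h j D i) ∧
      HasPathFaces dA dB f m h (j + 1) (c ≫ dA (m + 2) (j + 1)) := by
  obtain ⟨c, hc⟩ := hkan.2 m (j + 1) (by omega) (homotopyFaces dB g m h j D)
    fun i i' hii' hi' hi hi'j => homotopyFaces_compat hh hcoh hD (by omega) hii' hi' hi hi'j
  exact ⟨c, hc, hD.succ hA hj hc⟩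

theorem exists_homotopyComponents (hA : FaceIdentities dA)
    (hf : IsSemiSimplicialMap dB dA f)
    (hkan : KanRaw (fun n => A (n + 1)) (fun n i => dA (n + 1) i) (B (m + 2)))
    (hh : IsHomotopyLevel dA f g m h) (hcoh : IsHomotopyCoherent dA dB m h) :
    ∀ j ≤ m, ∃ c : ℕ → (B (m + 2) ⟶ A (m + 3)),
      (∀ l ≤ j, ∀ i ≤ m + 2, i ≠ l + 1 →
        c l ≫ dA (m + 2) i = homotopyFaces dB g m h l (homotopyPath dA f (m + 1) c l) i) ∧
      HasPathFaces dA dB f m h (j + 1) (homotopyPath dA f (m + 1) c (j + 1))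
  | 0, _ => by
    obtain ⟨c₀, hc₀, hD⟩ :=
      exists_homotopyHornFiller hA hkan hh hcoh (hasPathFaces_zero hf) (Nat.zero_le m)
    refine ⟨fun _ => c₀, fun l hl => ?_, hD⟩
    obtain rfl := Nat.le_zero.1 hl
    exact hc₀
  | j + 1, hj => by
    obtain ⟨c, hc, hD⟩ := exists_homotopyComponents hA hf hkan hh hcoh j (by omega)
    obtain ⟨c', hc', hD'⟩ := exists_homotopyHornFiller hA hkan hh hcoh hD hj
    refine ⟨Function.update c (j + 1) c', fun l hl => ?_, by simpa using hD'⟩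
    rw [homotopyPath_update hl]
    rcases hl.lt_or_eq with hl | rfl
    · rw [Function.update_of_ne (by omega)]
      exact hc l (by omega)
    · rw [Function.update_self]
      exact hc'

theorem exists_next_homotopyLevel (hA : FaceIdentities dA) (hB : FaceIdentities dB)
    (hf : IsSemiSimplicialMap dB dA f)
    (hg : IsSemiSimplicialMap dB dA g)
    (hkan : KanRaw (fun n => A (n + 1)) (fun n i => dA (n + 1) i) (B (m + 2)))
    (hfill : HasSphereFillers dA (B (m + 2))) (hh : IsHomotopyLevel dA f g m h)
    (hcoh : IsHomotopyCoherent dA dB m h) :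
    ∃ c : ℕ → (B (m + 2) ⟶ A (m + 3)),
      (IsHomotopyLevel dA f g (m + 1) c ∧ IsHomotopyCoherent dA dB (m + 1) c) ∧
        IsHomotopyLink dA dB m h c := by
  obtain ⟨c, hc, hD⟩ := exists_homotopyComponents hA hf hkan hh hcoh m le_rfl
  obtain ⟨top, htop⟩ := hfill.2 (m + 1) _ (isSphere_homotopyFaces hg hh hcoh hD)
  have hfaces : ∀ l ≤ m + 1, ∀ i ≤ m + 2, (i ≠ l + 1 ∨ l = m + 1) →
      Function.update c (m + 1) top l ≫ dA (m + 2) i = homotopyFaces dB g m h l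
        (homotopyPath dA f (m + 1) (Function.update c (m + 1) top) l) i := by
    intro l hl i hi hil
    rw [homotopyPath_update hl]
    rcases hl.lt_or_eq with hl | rfl
    · rw [Function.update_of_ne (by omega)]
      exact hc l (by omega) i hi (by omega)
    · rw [Function.update_self]
      exact htop i hi
  have hlink : IsHomotopyLink dA dB m h (Function.update c (m + 1) top) :=
    ⟨fun i j hij hj => by
      rw [hfaces j hj i (by omega) (Or.inl (by omega)), homotopyFaces_of_lt hij],
    fun i j hji hi hj => by rw [hfaces j hj i hi (Or.inl (by omega)), homotopyFaces_of_gt hji]⟩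
  refine ⟨_, ⟨⟨fun k hk => ?_, ?_⟩, hlink.isHomotopyCoherent hB⟩, hlink⟩
  · rw [hfaces k (by omega) k (by omega) (Or.inl (by omega)), homotopyFaces_self]
  · rw [homotopyPath_succ, hfaces (m + 1) le_rfl (m + 2) le_rfl (Or.inr rfl), homotopyFaces_succ]

theorem exists_homotopyLevel_zero (hfill : HasSphereFillers dA (B 1))
    (h0 : f 0 ≫ dA 0 0 = g 0 ≫ dA 0 0) :
    ∃ h : ℕ → (B 1 ⟶ A 2), IsHomotopyLevel dA f g 0 h ∧ IsHomotopyCoherent dA dB 0 h := by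
  obtain ⟨h₀, hh₀⟩ := hfill.2 0 (fun i => if i = 0 then f 0 else g 0) (by
    intro i j hij hj
    obtain ⟨rfl, rfl⟩ : i = 0 ∧ j = 1 := by omega
    simpa using h0.symm)
  refine ⟨fun _ => h₀, ⟨fun k hk => ?_, by simpa using hh₀ 1 le_rfl⟩,
    ⟨fun _ _ _ _ _ _ => by omega, fun _ _ _ _ _ _ => by omega, fun _ _ _ _ _ _ => by omega⟩⟩
  obtain rfl := Nat.le_zero.1 hk
  simpa using hh₀ 0 (Nat.zero_le 1)

theorem homot_of_hasSphereFillers (hA : FaceIdentities dA) (hB : FaceIdentities dB)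
    (hkan : ∀ n, KanRaw (fun n => A (n + 1)) (fun n i => dA (n + 1) i) (B (n + 1)))
    (hfill : ∀ n, HasSphereFillers dA (B (n + 1)))
    (hf : IsSemiSimplicialMap dB dA f)
    (hg : IsSemiSimplicialMap dB dA g)
    (h0 : f 0 ≫ dA 0 0 = g 0 ≫ dA 0 0) :
    Homot (fun n => B (n + 1)) (fun n => A (n + 1)) (fun n i => dB (n + 1) i)
      (fun n i => dA (n + 1) i) f g := by
  obtain ⟨h₀, hh₀⟩ := exists_homotopyLevel_zero (dB := dB) (hfill 0) h0
  obtain ⟨h, -, hh⟩ := exists_seq_of_step (α := fun m => ℕ → (B (m + 1) ⟶ A (m + 2)))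
    (fun m h => IsHomotopyLevel dA f g m h ∧ IsHomotopyCoherent dA dB m h)
    (IsHomotopyLink dA dB) h₀ hh₀
    fun m _ hh => exists_next_homotopyLevel hA hB hf hg (hkan (m + 1)) (hfill (m + 1)) hh.1 hh.2
  refine ⟨h, fun n => (hh n).1.1.1 0 (Nat.zero_le n), fun n => (hh n).1.1.2, fun n => (hh n).2.1,
    fun n i hi hin => ?_, fun n => (hh n).2.2⟩
  obtain ⟨i, rfl⟩ : ∃ k, i = k + 1 := ⟨i - 1, by omega⟩
  exact (hh n).1.1.1 (i + 1) hin

end Homotopy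

/-- Let `G` and `K` be two comonads on `C` generating the same
projective class `𝒫 = isProj G = isProj K` (hypothesis `hsame`), and suppose this class
is Kan: for every object `X` and every `P` in the class, the simplicial sets
`Hom(P, 𝔾X)` and `Hom(P, 𝕂X)` are Kan.  Then for every `X` the augmented simplicial
objects `𝔾X` and `𝕂X` are homotopically equivalent: there are semi-simplicial maps
`f : 𝔾X ⟶ 𝕂X` and `g : 𝕂X ⟶ 𝔾X` commuting with the identity on `X`, such that
`g ∘ f` and `f ∘ g` are simplicially homotopic to the respective identities. -/
theorem statement8 (G K : Comonad C)
    (hsame : ∀ {A B : C} (e : A ⟶ B), inE G e ↔ inE K e)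
    (hkan : ∀ (X P : C), isProj G P →
      KanRaw (fun n => iterObj G X (n + 1)) (fun n i => face G X (n + 1) i) P ∧
      KanRaw (fun n => iterObj K X (n + 1)) (fun n i => face K X (n + 1) i) P)
    (X : C) :
    ∃ (f : ∀ n, iterObj G X (n + 1) ⟶ iterObj K X (n + 1))
      (g : ∀ n, iterObj K X (n + 1) ⟶ iterObj G X (n + 1)),
      (f 0 ≫ face K X 0 0 = face G X 0 0) ∧
      (∀ n i, i ≤ n + 1 →
        f (n + 1) ≫ face K X (n + 1) i = face G X (n + 1) i ≫ f n) ∧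
      (g 0 ≫ face G X 0 0 = face K X 0 0) ∧
      (∀ n i, i ≤ n + 1 →
        g (n + 1) ≫ face G X (n + 1) i = face K X (n + 1) i ≫ g n) ∧
      Homot (fun n => iterObj G X (n + 1)) (fun n => iterObj G X (n + 1))
        (fun n i => face G X (n + 1) i) (fun n i => face G X (n + 1) i)
        (fun n => f n ≫ g n) (fun n => 𝟙 (iterObj G X (n + 1))) ∧
      Homot (fun n => iterObj K X (n + 1)) (fun n => iterObj K X (n + 1))
        (fun n i => face K X (n + 1) i) (fun n i => face K X (n + 1) i)
        (fun n => g n ≫ f n) (fun n => 𝟙 (iterObj K X (n + 1))) := by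
  have hproj : ∀ P, isProj G P ↔ isProj K P := isProj_congr hsame
  have projG : ∀ n, isProj G (iterObj G X (n + 1)) := fun n => isProj_obj G _
  have projK : ∀ n, isProj G (iterObj K X (n + 1)) := fun n => (hproj _).2 (isProj_obj K _)
  have fillG : ∀ P, isProj G P → HasSphereFillers (face G X) P :=
    fun P hP => hasSphereFillers_of_kan hP (hkan X P hP).1
  have fillK : ∀ P, isProj G P → HasSphereFillers (face K X) P :=
    fun P hP => hasSphereFillers_of_kan ((hproj P).1 hP) (hkan X P hP).2
  obtain ⟨f, hf₀, hf⟩ :=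
    exists_semiSimplicial_lift (faceIdentities_face G X) (fun n => fillK _ (projG n)) (𝟙 X)
  obtain ⟨g, hg₀, hg⟩ :=
    exists_semiSimplicial_lift (faceIdentities_face K X) (fun n => fillG _ (projK n)) (𝟙 X)
  replace hf₀ := hf₀.trans (Category.comp_id _)
  replace hg₀ := hg₀.trans (Category.comp_id _)
  have augG : (f 0 ≫ g 0) ≫ face G X 0 0 = 𝟙 _ ≫ face G X 0 0 := by
    rw [Category.assoc, Category.id_comp]
    exact (congrArg (f 0 ≫ ·) hg₀).trans hf₀
  have augK : (g 0 ≫ f 0) ≫ face K X 0 0 = 𝟙 _ ≫ face K X 0 0 := by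
    rw [Category.assoc, Category.id_comp]
    exact (congrArg (g 0 ≫ ·) hf₀).trans hg₀
  refine ⟨f, g, hf₀, hf, hg₀, hg, ?_, ?_⟩
  · exact homot_of_hasSphereFillers (faceIdentities_face G X) (faceIdentities_face G X)
      (fun n => (hkan X _ (projG n)).1) (fun n => fillG _ (projG n)) (hf.comp hg)
      (isSemiSimplicialMap_id _) augG
  · exact homot_of_hasSphereFillers (faceIdentities_face K X) (faceIdentities_face K X)
      (fun n => (hkan X _ (projK n)).2) (fun n => fillK _ (projK n)) (hg.comp hf)
      (isSemiSimplicialMap_id _) augK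

end Statement8
end

section
/- Let A be a simplicial object in a finitely complete category 𝒜, and let Aᴵ be defined by Aᴵ₀ = A₁ and, for n > 0, Aᴵ_n the limit (with projections pr₁, …, pr_{n+1} : Aᴵ_n → A_{n+1}) of the zigzag A_{n+1} →(∂₁) A_n ←(∂₁) A_{n+1} →(∂₂) A_n ← ⋯ → A_n ←(∂_n) A_{n+1}. Then the morphisms ∂ᴵᵢ : Aᴵ_n → Aᴵ_{n−1} and σᴵᵢ : Aᴵ_n → Aᴵ_{n+1} determined by ∂ᴵ₀ = ∂₀ ∘ pr₂ and ∂ᴵ₁ = ∂₂ ∘ pr₁ on Aᴵ₁, σᴵ₀ = (σ₁, σ₀) : Aᴵ₀ → Aᴵ₁, and in general pr_j ∘ ∂ᴵᵢ = ∂_{i+1} ∘ pr_j if j ≤ i, pr_j ∘ ∂ᴵᵢ = ∂ᵢ ∘ pr_{j+1} if j > i, and pr_k ∘ σᴵᵢ = σ_{i+1} ∘ pr_k if k ≤ i+1, pr_k ∘ σᴵᵢ = σᵢ ∘ pr_{k−1} if k > i+1, satisfy the simplicial identities and so determine a simplicial object Aᴵ. Moreover the morphisms ε₀(A)_n, ε₁(A)_n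 : Aᴵ_n → A_n and s(A)_n : A_n → Aᴵ_n defined by ε₀(A)₀ = ∂₀, ε₀(A)_n = ∂₀ ∘ pr₁, ε₁(A)₀ = ∂₁, ε₁(A)_n = ∂_{n+1} ∘ pr_{n+1}, and s(A)_n = (σ₀, …, σ_n) are simplicial morphisms ε₀(A), ε₁(A) : Aᴵ → A and s(A) : A → Aᴵ satisfying ε₀(A) ∘ s(A) = 1_A = ε₁(A) ∘ s(A); in other words (Aᴵ, ε₀(A), ε₁(A), s(A)) is a cocylinder on A. -/
open CategoryTheory
namespace Statement10

variable {A : Type*} [Category A]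

/-- A simplicial object in a category: objects `obj n`, face operators
`d n i : obj (n+1) ⟶ obj n` (meaningful for `i ≤ n + 1`) and degeneracy operators
`s n i : obj n ⟶ obj (n+1)` (meaningful for `i ≤ n`), subject to the simplicial
identities. -/
structure SimpObj (A : Type*) [Category A] where
  obj : ℕ → A
  d : (n i : ℕ) → (obj (n + 1) ⟶ obj n)
  s : (n i : ℕ) → (obj n ⟶ obj (n + 1))
  dd : ∀ n i j, i < j → j ≤ n + 2 →
    d (n + 1) j ≫ d n i = d (n + 1) i ≫ d n (j - 1)
  ds_lt : ∀ n i j, i < j → j ≤ n + 1 →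
    s (n + 1) j ≫ d (n + 1) i = d n i ≫ s n (j - 1)
  ds_eq : ∀ n i, i ≤ n → s n i ≫ d n i = 𝟙 (obj n)
  ds_eq' : ∀ n i, i ≤ n → s n i ≫ d n (i + 1) = 𝟙 (obj n)
  ds_gt : ∀ n i j, j + 1 < i → i ≤ n + 2 →
    s (n + 1) j ≫ d (n + 1) i = d n (i - 1) ≫ s n j
  ss : ∀ n i j, i ≤ j → j ≤ n →
    s n j ≫ s (n + 1) i = s n i ≫ s (n + 1) (j + 1)

/-- Let `X` be a simplicial object in a finitely complete category and
let `XI n` (with projections `pr n 1, …, pr n (n+1) : XI n ⟶ X (n+1)`) be the limit of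
the zigzag `Xₙ₊₁ →(∂₁) Xₙ ←(∂₁) Xₙ₊₁ →(∂₂) ⋯ ←(∂ₙ) Xₙ₊₁` (for `n = 0` this limit is
the one-object zigzag, so `XI 0 ≅ X₁` via `pr 0 1`).  Then the morphisms `dI` and `sI`
determined by the stated equations satisfy the simplicial identities, so `XI` is a
simplicial object; and `e0`, `e1`, `sX` (given by `ε₀ = ∂₀ ∘ pr₁`, `ε₁ = ∂ₙ₊₁ ∘ prₙ₊₁`,
`s = (σ₀, …, σₙ)`) are simplicial morphisms with `ε₀ ∘ s = 1 = ε₁ ∘ s`; i.e.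
`(XI, ε₀, ε₁, s)` is a cocylinder on `X`. -/
theorem statement10 [Limits.HasFiniteLimits A] (X : SimpObj A)
    (XI : ℕ → A) (pr : (n j : ℕ) → (XI n ⟶ X.obj (n + 1)))
    (hcone : ∀ n j, 1 ≤ j → j ≤ n → pr n j ≫ X.d n j = pr n (j + 1) ≫ X.d n j)
    (hlim : ∀ (n : ℕ) (W : A) (c : ℕ → (W ⟶ X.obj (n + 1))),
      (∀ j, 1 ≤ j → j ≤ n → c j ≫ X.d n j = c (j + 1) ≫ X.d n j) →
      ∃! m : W ⟶ XI n, ∀ j, 1 ≤ j → j ≤ n + 1 → m ≫ pr n j = c j)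
    (dI : (n i : ℕ) → (XI (n + 1) ⟶ XI n))
    (hdI_le : ∀ n i j, i ≤ n + 1 → 1 ≤ j → j ≤ i → j ≤ n + 1 →
      dI n i ≫ pr n j = pr (n + 1) j ≫ X.d (n + 1) (i + 1))
    (hdI_gt : ∀ n i j, i < j → j ≤ n + 1 →
      dI n i ≫ pr n j = pr (n + 1) (j + 1) ≫ X.d (n + 1) i)
    (sI : (n i : ℕ) → (XI n ⟶ XI (n + 1)))
    (hsI_le : ∀ n i k, i ≤ n → 1 ≤ k → k ≤ i + 1 →
      sI n i ≫ pr (n + 1) k = pr n k ≫ X.s (n + 1) (i + 1))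
    (hsI_gt : ∀ n i k, i ≤ n → i + 1 < k → k ≤ n + 2 →
      sI n i ≫ pr (n + 1) k = pr n (k - 1) ≫ X.s (n + 1) i)
    (e0 e1 : ∀ n, XI n ⟶ X.obj n)
    (he0 : ∀ n, e0 n = pr n 1 ≫ X.d n 0)
    (he1 : ∀ n, e1 n = pr n (n + 1) ≫ X.d n (n + 1))
    (sX : ∀ n, X.obj n ⟶ XI n)
    (hsX : ∀ n k, 1 ≤ k → k ≤ n + 1 → sX n ≫ pr n k = X.s n (k - 1)) :
    -- the simplicial identities for `(XI, dI, sI)`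
    (∀ n i j, i < j → j ≤ n + 2 →
      dI (n + 1) j ≫ dI n i = dI (n + 1) i ≫ dI n (j - 1)) ∧
    (∀ n i j, i < j → j ≤ n + 1 →
      sI (n + 1) j ≫ dI (n + 1) i = dI n i ≫ sI n (j - 1)) ∧
    (∀ n i, i ≤ n → sI n i ≫ dI n i = 𝟙 (XI n)) ∧
    (∀ n i, i ≤ n → sI n i ≫ dI n (i + 1) = 𝟙 (XI n)) ∧
    (∀ n i j, j + 1 < i → i ≤ n + 2 →
      sI (n + 1) j ≫ dI (n + 1) i = dI n (i - 1) ≫ sI n j) ∧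
    (∀ n i j, i ≤ j → j ≤ n →
      sI n j ≫ sI (n + 1) i = sI n i ≫ sI (n + 1) (j + 1)) ∧
    -- `e0`, `e1` and `sX` are simplicial morphisms
    (∀ n i, i ≤ n + 1 → dI n i ≫ e0 n = e0 (n + 1) ≫ X.d n i) ∧
    (∀ n i, i ≤ n → sI n i ≫ e0 (n + 1) = e0 n ≫ X.s n i) ∧
    (∀ n i, i ≤ n + 1 → dI n i ≫ e1 n = e1 (n + 1) ≫ X.d n i) ∧
    (∀ n i, i ≤ n → sI n i ≫ e1 (n + 1) = e1 n ≫ X.s n i) ∧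
    (∀ n i, i ≤ n + 1 → X.d n i ≫ sX n = sX (n + 1) ≫ dI n i) ∧
    (∀ n i, i ≤ n → X.s n i ≫ sX (n + 1) = sX n ≫ sI n i) ∧
    -- `sX` is a common section of `e0` and `e1`
    (∀ n, sX n ≫ e0 n = 𝟙 (X.obj n)) ∧
    (∀ n, sX n ≫ e1 n = 𝟙 (X.obj n)) := by
  have ext : ∀ (n : ℕ) (W : A) (m₁ m₂ : W ⟶ XI n),
      (∀ j, 1 ≤ j → j ≤ n + 1 → m₁ ≫ pr n j = m₂ ≫ pr n j) → m₁ = m₂ := by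
    intro n W m₁ m₂ h
    obtain ⟨m, hm, hu⟩ := hlim n W (fun j => m₁ ≫ pr n j)
      (fun j h1 h2 => by rw [Category.assoc, Category.assoc, hcone n j h1 h2])
    rw [hu m₁ fun j _ _ => rfl, hu m₂ fun j h1 h2 => (h j h1 h2).symm]
  refine ⟨?_, ?_, ?_, ?_, ?_, ?_, ?_, ?_, ?_, ?_, ?_, ?_, ?_, ?_⟩
  -- G1 : dd
  · intro n i j hij hj
    obtain ⟨j, rfl⟩ : ∃ j', j = j' + 1 := ⟨j - 1, by omega⟩
    simp only [Nat.add_sub_cancel]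
    apply ext
    intro p hp1 hp2
    by_cases hpi : p ≤ i
    · slice_lhs 2 3 => rw [hdI_le n i p (by omega) hp1 hpi hp2]
      slice_lhs 1 2 => rw [hdI_le (n+1) (j+1) p (by omega) hp1 (by omega) (by omega)]
      slice_lhs 2 3 => rw [X.dd (n+1) (i+1) (j+2) (by omega) (by omega)]
      slice_rhs 2 3 => rw [hdI_le n j p (by omega) hp1 (by omega) hp2]
      slice_rhs 1 2 => rw [hdI_le (n+1) i p (by omega) hp1 (by omega) (by omega)]
      simp only [Category.assoc, show j + 2 - 1 = j + 1 from rfl]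
    · by_cases hpj : p ≤ j
      · slice_lhs 2 3 => rw [hdI_gt n i p (by omega) hp2]
        slice_lhs 1 2 => rw [hdI_le (n+1) (j+1) (p+1) (by omega) (by omega) (by omega) (by omega)]
        slice_lhs 2 3 => rw [X.dd (n+1) i (j+2) (by omega) (by omega)]
        slice_rhs 2 3 => rw [hdI_le n j p (by omega) hp1 hpj hp2]
        slice_rhs 1 2 => rw [hdI_gt (n+1) i p (by omega) (by omega)]
        simp only [Category.assoc, show j + 2 - 1 = j + 1 from rfl]
      · slice_lhs 2 3 => rw [hdI_gt n i p (by omega) hp2]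
        slice_lhs 1 2 => rw [hdI_gt (n+1) (j+1) (p+1) (by omega) (by omega)]
        slice_lhs 2 3 => rw [X.dd (n+1) i (j+1) (by omega) (by omega)]
        slice_rhs 2 3 => rw [hdI_gt n j p (by omega) hp2]
        slice_rhs 1 2 => rw [hdI_gt (n+1) i (p+1) (by omega) (by omega)]
        simp only [Category.assoc, Nat.add_sub_cancel]
  -- G2 : ds_lt
  · intro n i j hij hj
    obtain ⟨j, rfl⟩ : ∃ j', j = j' + 1 := ⟨j - 1, by omega⟩
    simp only [Nat.add_sub_cancel]
    apply ext
    intro p hp1 hp2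
    by_cases hpi : p ≤ i
    · slice_lhs 2 3 => rw [hdI_le (n+1) i p (by omega) hp1 hpi (by omega)]
      slice_lhs 1 2 => rw [hsI_le (n+1) (j+1) p (by omega) hp1 (by omega)]
      slice_lhs 2 3 => rw [X.ds_lt (n+1) (i+1) (j+2) (by omega) (by omega)]
      slice_rhs 2 3 => rw [hsI_le n j p (by omega) hp1 (by omega)]
      slice_rhs 1 2 => rw [hdI_le n i p (by omega) hp1 hpi (by omega)]
      simp only [Category.assoc, show j + 2 - 1 = j + 1 from rfl]
    · by_cases hpj : p ≤ j + 1
      · slice_lhs 2 3 => rw [hdI_gt (n+1) i p (by omega) (by omega)]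
        slice_lhs 1 2 => rw [hsI_le (n+1) (j+1) (p+1) (by omega) (by omega) (by omega)]
        slice_lhs 2 3 => rw [X.ds_lt (n+1) i (j+2) (by omega) (by omega)]
        slice_rhs 2 3 => rw [hsI_le n j p (by omega) hp1 (by omega)]
        slice_rhs 1 2 => rw [hdI_gt n i p (by omega) (by omega)]
        simp only [Category.assoc, show j + 2 - 1 = j + 1 from rfl]
      · slice_lhs 2 3 => rw [hdI_gt (n+1) i p (by omega) (by omega)]
        slice_lhs 1 2 => rw [hsI_gt (n+1) (j+1) (p+1) (by omega) (by omega) (by omega)]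
        slice_lhs 2 3 => rw [X.ds_lt (n+1) i (j+1) (by omega) (by omega)]
        slice_rhs 2 3 => rw [hsI_gt n j p (by omega) (by omega) (by omega)]
        slice_rhs 1 2 => rw [hdI_gt n i (p-1) (by omega) (by omega)]
        simp only [Category.assoc, Nat.add_sub_cancel, show p - 1 + 1 = p by omega]
  -- G3 : ds_eq
  · intro n i hi
    apply ext
    intro p hp1 hp2
    rw [Category.id_comp]
    by_cases hpi : p ≤ i
    · slice_lhs 2 3 => rw [hdI_le n i p (by omega) hp1 hpi hp2]
      slice_lhs 1 2 => rw [hsI_le n i p hi hp1 (by omega)]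
      slice_lhs 2 3 => rw [X.ds_eq (n+1) (i+1) (by omega)]
      simp
    · slice_lhs 2 3 => rw [hdI_gt n i p (by omega) hp2]
      slice_lhs 1 2 => rw [hsI_gt n i (p+1) hi (by omega) (by omega)]
      slice_lhs 2 3 => rw [X.ds_eq (n+1) i (by omega)]
      simp
  -- G4 : ds_eq'
  · intro n i hi
    apply ext
    intro p hp1 hp2
    rw [Category.id_comp]
    by_cases hpi : p ≤ i + 1
    · slice_lhs 2 3 => rw [hdI_le n (i+1) p (by omega) hp1 hpi hp2]
      slice_lhs 1 2 => rw [hsI_le n i p hi hp1 (by omega)]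
      slice_lhs 2 3 => rw [X.ds_eq' (n+1) (i+1) (by omega)]
      simp
    · slice_lhs 2 3 => rw [hdI_gt n (i+1) p (by omega) hp2]
      slice_lhs 1 2 => rw [hsI_gt n i (p+1) hi (by omega) (by omega)]
      slice_lhs 2 3 => rw [X.ds_eq' (n+1) i (by omega)]
      simp
  -- G5 : ds_gt
  · intro n i j hji hi
    obtain ⟨i, rfl⟩ : ∃ i', i = i' + 1 := ⟨i - 1, by omega⟩
    simp only [Nat.add_sub_cancel]
    apply ext
    intro p hp1 hp2
    by_cases hpj : p ≤ j + 1
    · slice_lhs 2 3 => rw [hdI_le (n+1) (i+1) p (by omega) hp1 (by omega) (by omega)]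
      slice_lhs 1 2 => rw [hsI_le (n+1) j p (by omega) hp1 (by omega)]
      slice_lhs 2 3 => rw [X.ds_gt (n+1) (i+2) (j+1) (by omega) (by omega)]
      slice_rhs 2 3 => rw [hsI_le n j p (by omega) hp1 (by omega)]
      slice_rhs 1 2 => rw [hdI_le n i p (by omega) hp1 (by omega) (by omega)]
      simp only [Category.assoc, show i + 2 - 1 = i + 1 from rfl]
    · by_cases hpi : p ≤ i + 1
      · slice_lhs 2 3 => rw [hdI_le (n+1) (i+1) p (by omega) hp1 (by omega) (by omega)]
        slice_lhs 1 2 => rw [hsI_gt (n+1) j p (by omega) (by omega) (by omega)]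
        slice_lhs 2 3 => rw [X.ds_gt (n+1) (i+2) j (by omega) (by omega)]
        slice_rhs 2 3 => rw [hsI_gt n j p (by omega) (by omega) (by omega)]
        slice_rhs 1 2 => rw [hdI_le n i (p-1) (by omega) (by omega) (by omega) (by omega)]
        simp only [Category.assoc, show i + 2 - 1 = i + 1 from rfl]
      · slice_lhs 2 3 => rw [hdI_gt (n+1) (i+1) p (by omega) (by omega)]
        slice_lhs 1 2 => rw [hsI_gt (n+1) j (p+1) (by omega) (by omega) (by omega)]
        slice_lhs 2 3 => rw [X.ds_gt (n+1) (i+1) j (by omega) (by omega)]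
        slice_rhs 2 3 => rw [hsI_gt n j p (by omega) (by omega) (by omega)]
        slice_rhs 1 2 => rw [hdI_gt n i (p-1) (by omega) (by omega)]
        simp only [Category.assoc, Nat.add_sub_cancel, show p - 1 + 1 = p by omega]
  -- G6 : ss
  · intro n i j hij hj
    apply ext
    intro p hp1 hp2
    by_cases hpi : p ≤ i + 1
    · slice_lhs 2 3 => rw [hsI_le (n+1) i p (by omega) hp1 (by omega)]
      slice_lhs 1 2 => rw [hsI_le n j p (by omega) hp1 (by omega)]
      slice_lhs 2 3 => rw [X.ss (n+1) (i+1) (j+1) (by omega) (by omega)]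
      slice_rhs 2 3 => rw [hsI_le (n+1) (j+1) p (by omega) hp1 (by omega)]
      slice_rhs 1 2 => rw [hsI_le n i p (by omega) hp1 (by omega)]
      simp only [Category.assoc]
    · by_cases hpj : p ≤ j + 2
      · slice_lhs 2 3 => rw [hsI_gt (n+1) i p (by omega) (by omega) (by omega)]
        slice_lhs 1 2 => rw [hsI_le n j (p-1) (by omega) (by omega) (by omega)]
        slice_lhs 2 3 => rw [X.ss (n+1) i (j+1) (by omega) (by omega)]
        slice_rhs 2 3 => rw [hsI_le (n+1) (j+1) p (by omega) hp1 (by omega)]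
        slice_rhs 1 2 => rw [hsI_gt n i p (by omega) (by omega) (by omega)]
        simp only [Category.assoc]
      · slice_lhs 2 3 => rw [hsI_gt (n+1) i p (by omega) (by omega) (by omega)]
        slice_lhs 1 2 => rw [hsI_gt n j (p-1) (by omega) (by omega) (by omega)]
        slice_lhs 2 3 => rw [X.ss (n+1) i j (by omega) (by omega)]
        slice_rhs 2 3 => rw [hsI_gt (n+1) (j+1) p (by omega) (by omega) (by omega)]
        slice_rhs 1 2 => rw [hsI_gt n i (p-1) (by omega) (by omega) (by omega)]
        simp only [Category.assoc]
  -- G7 : e0 natural wrt d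
  · intro n i hi
    rw [he0 n, he0 (n+1)]
    by_cases hi0 : 1 ≤ i
    · slice_lhs 1 2 => rw [hdI_le n i 1 (by omega) (by omega) (by omega) (by omega)]
      slice_lhs 2 3 => rw [X.dd n 0 (i+1) (by omega) (by omega)]
      simp only [Category.assoc, Nat.add_sub_cancel]
    · have hieq : i = 0 := by omega
      subst hieq
      have h01 : X.d (n+1) 1 ≫ X.d n 0 = X.d (n+1) 0 ≫ X.d n 0 := by
        simpa using X.dd n 0 1 (by omega) (by omega)
      slice_lhs 1 2 => rw [hdI_gt n 0 1 (by omega) (by omega)]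
      slice_lhs 2 3 => rw [← h01]
      slice_lhs 1 2 => rw [← hcone (n+1) 1 (by omega) (by omega)]
      slice_lhs 2 3 => rw [h01]
      simp only [Category.assoc]
  -- G8 : e0 natural wrt s
  · intro n i hi
    rw [he0 (n+1), he0 n]
    slice_lhs 1 2 => rw [hsI_le n i 1 hi (by omega) (by omega)]
    slice_lhs 2 3 => rw [X.ds_lt n 0 (i+1) (by omega) (by omega)]
    simp only [Category.assoc, Nat.add_sub_cancel]
  -- G9 : e1 natural wrt d
  · intro n i hi
    rw [he1 n, he1 (n+1)]
    by_cases hin : i ≤ n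
    · slice_lhs 1 2 => rw [hdI_gt n i (n+1) (by omega) (by omega)]
      have h := X.dd n i (n+1+1) (by omega) (by omega)
      simp only [Nat.add_sub_cancel] at h
      slice_rhs 2 3 => rw [h]
      simp only [Category.assoc]
    · have hieq : i = n + 1 := by omega
      subst hieq
      have h := X.dd n (n+1) (n+1+1) (by omega) (by omega)
      simp only [Nat.add_sub_cancel] at h
      slice_lhs 1 2 => rw [hdI_le n (n+1) (n+1) (by omega) (by omega) (by omega) (by omega)]
      slice_lhs 2 3 => rw [h]
      slice_lhs 1 2 => rw [hcone (n+1) (n+1) (by omega) (by omega)]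
      slice_lhs 2 3 => rw [← h]
      simp only [Category.assoc]
  -- G10 : e1 natural wrt s
  · intro n i hi
    rw [he1 (n+1), he1 n]
    have h2 := hsI_gt n i (n+1+1) hi (by omega) (by omega)
    simp only [Nat.add_sub_cancel] at h2
    slice_lhs 1 2 => rw [h2]
    have h3 := X.ds_gt n (n+1+1) i (by omega) (by omega)
    simp only [Nat.add_sub_cancel] at h3
    slice_lhs 2 3 => rw [h3]
    simp only [Category.assoc]
  -- G11 : sX natural wrt d
  · intro n i hi
    apply ext
    intro p hp1 hp2
    slice_lhs 2 3 => rw [hsX n p hp1 hp2]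
    by_cases hpi : p ≤ i
    · slice_rhs 2 3 => rw [hdI_le n i p hi hp1 hpi hp2]
      slice_rhs 1 2 => rw [hsX (n+1) p hp1 (by omega)]
      have h := X.ds_gt n (i+1) (p-1) (by omega) (by omega)
      simp only [Nat.add_sub_cancel] at h
      rw [h]
    · slice_rhs 2 3 => rw [hdI_gt n i p (by omega) hp2]
      slice_rhs 1 2 => rw [hsX (n+1) (p+1) (by omega) (by omega)]
      simp only [Nat.add_sub_cancel]
      rw [X.ds_lt n i p (by omega) hp2]
  -- G12 : sX natural wrt s
  · intro n i hi
    apply ext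
    intro p hp1 hp2
    slice_lhs 2 3 => rw [hsX (n+1) p hp1 hp2]
    by_cases hpi : p ≤ i + 1
    · slice_rhs 2 3 => rw [hsI_le n i p hi hp1 hpi]
      slice_rhs 1 2 => rw [hsX n p hp1 (by omega)]
      rw [X.ss n (p-1) i (by omega) hi]
    · slice_rhs 2 3 => rw [hsI_gt n i p hi (by omega) hp2]
      slice_rhs 1 2 => rw [hsX n (p-1) (by omega) (by omega)]
      have h := X.ss n i (p-1-1) (by omega) (by omega)
      rw [show p - 1 - 1 + 1 = p - 1 by omega] at h
      rw [h]
  -- G13 : sX section of e0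
  · intro n
    rw [he0 n]
    have h := hsX n 1 (le_refl 1) (by omega)
    rw [show (1:ℕ) - 1 = 0 from rfl] at h
    slice_lhs 1 2 => rw [h]
    rw [X.ds_eq n 0 (by omega)]
  -- G14 : sX section of e1
  · intro n
    rw [he1 n]
    have h := hsX n (n+1) (by omega) (le_refl _)
    simp only [Nat.add_sub_cancel] at h
    slice_lhs 1 2 => rw [h]
    rw [X.ds_eq' n n (le_refl n)]


end Statement10
end

section
/- Let A and B be simplicial objects in a finitely complete category 𝒜, and let (Aᴵ, ε₀(A), ε₁(A), s(A)) be the cocylinder on A constructed from the limits of the zigzags A_{n+1} → A_n ← A_{n+1} → ⋯ ← A_{n+1}. Two semi-simplicial maps f, g : B → A are simplicially homotopic if and only if there exists a semi-simplicial map h : B → Aᴵ satisfying ε₀(A) ∘ h = f and ε₁(A) ∘ h = g. -/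
open CategoryTheory
namespace Statement11

variable {A : Type*} [Category A]

/-- A simplicial object in a category: objects `obj n`, face operators
`d n i : obj (n+1) ⟶ obj n` (meaningful for `i ≤ n + 1`) and degeneracy operators
`s n i : obj n ⟶ obj (n+1)` (meaningful for `i ≤ n`), subject to the simplicial
identities. -/
structure SimpObj (A : Type*) [Category A] where
  obj : ℕ → A
  d : (n i : ℕ) → (obj (n + 1) ⟶ obj n)
  s : (n i : ℕ) → (obj n ⟶ obj (n + 1))
  dd : ∀ n i j, i < j → j ≤ n + 2 →
    d (n + 1) j ≫ d n i = d (n + 1) i ≫ d n (j - 1)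
  ds_lt : ∀ n i j, i < j → j ≤ n + 1 →
    s (n + 1) j ≫ d (n + 1) i = d n i ≫ s n (j - 1)
  ds_eq : ∀ n i, i ≤ n → s n i ≫ d n i = 𝟙 (obj n)
  ds_eq' : ∀ n i, i ≤ n → s n i ≫ d n (i + 1) = 𝟙 (obj n)
  ds_gt : ∀ n i j, j + 1 < i → i ≤ n + 2 →
    s (n + 1) j ≫ d (n + 1) i = d n (i - 1) ≫ s n j
  ss : ∀ n i j, i ≤ j → j ≤ n →
    s n j ≫ s (n + 1) i = s n i ≫ s (n + 1) (j + 1)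

/-- Let `X` and `B` be simplicial objects in a finitely complete
category, and let `(XI, e0, e1, sX)` be the cocylinder on `X` constructed from the limits
of the zigzags `Xₙ₊₁ →(∂₁) Xₙ ←(∂₁) Xₙ₊₁ → ⋯ ←(∂ₙ) Xₙ₊₁`.  Two semi-simplicial maps
`f, g : B ⟶ X` are simplicially homotopic if and only if there is a semi-simplicial map
`h : B ⟶ XI` with `e0 ∘ h = f` and `e1 ∘ h = g`. -/
theorem statement11 [Limits.HasFiniteLimits A] (X B : SimpObj A)
    (XI : ℕ → A) (pr : (n j : ℕ) → (XI n ⟶ X.obj (n + 1)))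
    (hcone : ∀ n j, 1 ≤ j → j ≤ n → pr n j ≫ X.d n j = pr n (j + 1) ≫ X.d n j)
    (hlim : ∀ (n : ℕ) (W : A) (c : ℕ → (W ⟶ X.obj (n + 1))),
      (∀ j, 1 ≤ j → j ≤ n → c j ≫ X.d n j = c (j + 1) ≫ X.d n j) →
      ∃! m : W ⟶ XI n, ∀ j, 1 ≤ j → j ≤ n + 1 → m ≫ pr n j = c j)
    (dI : (n i : ℕ) → (XI (n + 1) ⟶ XI n))
    (hdI_le : ∀ n i j, i ≤ n + 1 → 1 ≤ j → j ≤ i → j ≤ n + 1 →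
      dI n i ≫ pr n j = pr (n + 1) j ≫ X.d (n + 1) (i + 1))
    (hdI_gt : ∀ n i j, i < j → j ≤ n + 1 →
      dI n i ≫ pr n j = pr (n + 1) (j + 1) ≫ X.d (n + 1) i)
    (sI : (n i : ℕ) → (XI n ⟶ XI (n + 1)))
    (hsI_le : ∀ n i k, i ≤ n → 1 ≤ k → k ≤ i + 1 →
      sI n i ≫ pr (n + 1) k = pr n k ≫ X.s (n + 1) (i + 1))
    (hsI_gt : ∀ n i k, i ≤ n → i + 1 < k → k ≤ n + 2 →
      sI n i ≫ pr (n + 1) k = pr n (k - 1) ≫ X.s (n + 1) i)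
    (e0 e1 : ∀ n, XI n ⟶ X.obj n)
    (he0 : ∀ n, e0 n = pr n 1 ≫ X.d n 0)
    (he1 : ∀ n, e1 n = pr n (n + 1) ≫ X.d n (n + 1))
    (sX : ∀ n, X.obj n ⟶ XI n)
    (hsX : ∀ n k, 1 ≤ k → k ≤ n + 1 → sX n ≫ pr n k = X.s n (k - 1))
    -- two semi-simplicial maps `f, g : B ⟶ X`
    (f g : ∀ n, B.obj n ⟶ X.obj n)
    (hf : ∀ n i, i ≤ n + 1 → f (n + 1) ≫ X.d n i = B.d n i ≫ f n)
    (hg : ∀ n i, i ≤ n + 1 → g (n + 1) ≫ X.d n i = B.d n i ≫ g n) :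
    -- `f` and `g` are simplicially homotopic …
    (∃ h : (n i : ℕ) → (B.obj n ⟶ X.obj (n + 1)),
      (∀ n, h n 0 ≫ X.d n 0 = f n) ∧
      (∀ n, h n n ≫ X.d n (n + 1) = g n) ∧
      (∀ n i j, i < j → j ≤ n + 1 →
        h (n + 1) j ≫ X.d (n + 1) i = B.d n i ≫ h n (j - 1)) ∧
      (∀ n i, 1 ≤ i → i ≤ n →
        h n i ≫ X.d n i = h n (i - 1) ≫ X.d n i) ∧
      (∀ n i j, j + 1 < i → i ≤ n + 2 → j ≤ n + 1 →
        h (n + 1) j ≫ X.d (n + 1) i = B.d n (i - 1) ≫ h n j)) ↔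
    -- … iff they are homotopic with respect to the cocylinder `(XI, e0, e1, sX)`
    (∃ h : ∀ n, B.obj n ⟶ XI n,
      (∀ n i, i ≤ n + 1 → h (n + 1) ≫ dI n i = B.d n i ≫ h n) ∧
      (∀ n, h n ≫ e0 n = f n) ∧
      (∀ n, h n ≫ e1 n = g n)) := by
  -- extensionality for maps into the limit `XI n`
  have uniq : ∀ (n : ℕ) (W : A) (m₁ m₂ : W ⟶ XI n),
      (∀ j, 1 ≤ j → j ≤ n + 1 → m₁ ≫ pr n j = m₂ ≫ pr n j) → m₁ = m₂ := by
    intro n W m₁ m₂ hm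
    obtain ⟨m, _, hu⟩ := hlim n W (fun j => m₁ ≫ pr n j) (fun j h1 h2 => by
      rw [Category.assoc, Category.assoc, hcone n j h1 h2])
    rw [hu m₁ (fun j h1 h2 => rfl), hu m₂ (fun j h1 h2 => (hm j h1 h2).symm)]
  constructor
  · rintro ⟨h, h1, h2, h3, h4, h5⟩
    have HE : ∀ n, ∃ m : B.obj n ⟶ XI n,
        ∀ j, 1 ≤ j → j ≤ n + 1 → m ≫ pr n j = h n (j - 1) := fun n =>
      (hlim n (B.obj n) (fun j => h n (j - 1)) (fun j hj1 hj2 => by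
        have := (h4 n j hj1 hj2).symm
        simpa using this)).exists
    choose H hH using HE
    refine ⟨H, ?_, ?_, ?_⟩
    · intro n i hi
      apply uniq n
      intro j hj1 hj2
      rcases le_or_gt j i with hji | hji
      · rw [Category.assoc, hdI_le n i j hi hj1 hji hj2, ← Category.assoc,
          hH (n + 1) j hj1 (by omega)]
        have h5' := h5 n (i + 1) (j - 1) (by omega) (by omega) (by omega)
        rw [h5']
        simp only [Nat.add_sub_cancel]
        rw [Category.assoc, hH n j hj1 hj2]
      · rw [Category.assoc, hdI_gt n i j hji hj2, ← Category.assoc,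
          hH (n + 1) (j + 1) (by omega) (by omega)]
        simp only [Nat.add_sub_cancel]
        rw [h3 n i j hji hj2, Category.assoc, hH n j hj1 hj2]
    · intro n
      rw [he0, ← Category.assoc, hH n 1 le_rfl (by omega)]
      exact h1 n
    · intro n
      rw [he1, ← Category.assoc, hH n (n + 1) (by omega) le_rfl]
      simpa using h2 n
  · rintro ⟨H, hHd, hHe0, hHe1⟩
    refine ⟨fun n i => H n ≫ pr n (i + 1), ?_, ?_, ?_, ?_, ?_⟩
    · intro n
      rw [Category.assoc, ← he0, hHe0]
    · intro n
      rw [Category.assoc, ← he1, hHe1]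
    · intro n i j hij hj
      have hj1 : j - 1 + 1 = j := by omega
      dsimp only
      rw [Category.assoc, ← hdI_gt n i j hij hj, ← Category.assoc,
        hHd n i (by omega), Category.assoc, hj1]
    · intro n i hi1 hi2
      have hi1' : i - 1 + 1 = i := by omega
      dsimp only
      rw [hi1', Category.assoc, Category.assoc, hcone n i hi1 hi2]
    · intro n i j hji hi hj
      have key := hdI_le n (i - 1) (j + 1) (by omega) (by omega) (by omega) (by omega)
      have hi1 : i - 1 + 1 = i := by omega
      rw [hi1] at key
      dsimp only
      rw [Category.assoc, ← key, ← Category.assoc, hHd n (i - 1) (by omega),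
        Category.assoc]

end Statement11
end

section
/- Let C be a finitely complete category, 𝒫 a class of objects of C, and A = (A_n)_{n ≥ −1} an augmented simplicial object such that for every P ∈ 𝒫 the augmented simplicial set Hom(P, A) is contractible and Kan. Then A is 𝒫-exact: the augmentation ∂₀ : A₀ → A_{−1} is 𝒫-epic, and for every n ≥ 0 the comparison morphism from A_{n+1} to the simplicial kernel K_{n+1} of the faces (∂ᵢ : A_n → A_{n−1})_{i ∈ [n]} is 𝒫-epic. -/
namespace Statement14

open CategoryTheory

variable {C : Type*} [Category C]

/-- An augmented simplicial object `A = (Aₙ)_{n ≥ -1}` in a category `C`: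
`obj n = Aₙ` for `n ≥ 0`, `pt = A₋₁`, face operators `d n i : Aₙ₊₁ ⟶ Aₙ`
(meaningful for `i ≤ n + 1`), degeneracy operators `s n i : Aₙ ⟶ Aₙ₊₁`
(meaningful for `i ≤ n`), and augmentation `aug : A₀ ⟶ A₋₁`, subject to the
simplicial identities. -/
structure AugSimp (C : Type*) [Category C] where
  obj : ℕ → C
  pt : C
  d : (n i : ℕ) → (obj (n + 1) ⟶ obj n)
  s : (n i : ℕ) → (obj n ⟶ obj (n + 1))
  aug : obj 0 ⟶ pt
  dd : ∀ n i j, i < j → j ≤ n + 2 →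
    d (n + 1) j ≫ d n i = d (n + 1) i ≫ d n (j - 1)
  daug : d 0 0 ≫ aug = d 0 1 ≫ aug
  ds_lt : ∀ n i j, i < j → j ≤ n + 1 →
    s (n + 1) j ≫ d (n + 1) i = d n i ≫ s n (j - 1)
  ds_eq : ∀ n i, i ≤ n → s n i ≫ d n i = 𝟙 (obj n)
  ds_eq' : ∀ n i, i ≤ n → s n i ≫ d n (i + 1) = 𝟙 (obj n)
  ds_gt : ∀ n i j, j + 1 < i → i ≤ n + 2 →
    s (n + 1) j ≫ d (n + 1) i = d n (i - 1) ≫ s n j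
  ss : ∀ n i j, i ≤ j → j ≤ n →
    s n j ≫ s (n + 1) i = s n i ≫ s (n + 1) (j + 1)

/-- The augmented simplicial set `Hom(P, A)` is contractible: it admits a contraction,
i.e. maps `hₙ : Hom(P, Aₙ) → Hom(P, Aₙ₊₁)` for `n ≥ -1` with `∂₀ hₙ = 1` and
`∂ᵢ hₙ = hₙ₋₁ ∂ᵢ₋₁` for `i > 0`. -/
def AugSimp.ContractibleAt (A : AugSimp C) (P : C) : Prop :=
  ∃ (hm : (P ⟶ A.pt) → (P ⟶ A.obj 0))
    (h : (n : ℕ) → (P ⟶ A.obj n) → (P ⟶ A.obj (n + 1))),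
    (∀ x : P ⟶ A.pt, hm x ≫ A.aug = x) ∧
    (∀ (n : ℕ) (x : P ⟶ A.obj n), h n x ≫ A.d n 0 = x) ∧
    (∀ x : P ⟶ A.obj 0, h 0 x ≫ A.d 0 1 = hm (x ≫ A.aug)) ∧
    (∀ (n : ℕ) (x : P ⟶ A.obj (n + 1)) (i : ℕ), 1 ≤ i → i ≤ n + 2 →
      h (n + 1) x ≫ A.d (n + 1) i = h n (x ≫ A.d n (i - 1)))

/-- The simplicial set `Hom(P, A)` is Kan: every `(n, k)`-horn has a filler.
The first clause treats horns of dimension `1`, the second those of dimension `≥ 2`. -/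
def AugSimp.KanAt (A : AugSimp C) (P : C) : Prop :=
  (∀ k, k ≤ 1 → ∀ a : ℕ → (P ⟶ A.obj 0),
    ∃ b : P ⟶ A.obj 1, ∀ i, i ≤ 1 → i ≠ k → b ≫ A.d 0 i = a i) ∧
  (∀ (n k : ℕ), k ≤ n + 2 → ∀ a : ℕ → (P ⟶ A.obj (n + 1)),
    (∀ i j, i < j → j ≤ n + 2 → i ≠ k → j ≠ k →
      a j ≫ A.d n i = a i ≫ A.d n (j - 1)) →
    ∃ b : P ⟶ A.obj (n + 2), ∀ i, i ≤ n + 2 → i ≠ k → b ≫ A.d (n + 1) i = a i)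

/-- Let `C` be finitely complete, `Pcl` a class of objects, and `A` an
augmented simplicial object such that for every `P ∈ Pcl` the augmented simplicial set
`Hom(P, A)` is contractible and Kan.  Then `A` is `Pcl`-exact: the augmentation is
`Pcl`-epic, and for every `n ≥ 0` the comparison morphism from `Aₙ₊₁` to the simplicial
kernel of the faces `(∂ᵢ : Aₙ ⟶ Aₙ₋₁)_{i ∈ [n]}` is `Pcl`-epic.  The second clause is
the case `n = 0` (the kernel pair of the augmentation), the third the case `n ≥ 1`. -/
theorem statement14 [Limits.HasFiniteLimits C]
    (Pcl : C → Prop) (A : AugSimp C)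
    (h : ∀ P : C, Pcl P → A.ContractibleAt P ∧ A.KanAt P) :
    (∀ P : C, Pcl P → ∀ y : P ⟶ A.pt, ∃ x : P ⟶ A.obj 0, x ≫ A.aug = y) ∧
    (∀ (K : C) (k₀ k₁ : K ⟶ A.obj 0),
      k₁ ≫ A.aug = k₀ ≫ A.aug →
      (∀ (W : C) (c₀ c₁ : W ⟶ A.obj 0), c₁ ≫ A.aug = c₀ ≫ A.aug →
        ∃! m : W ⟶ K, m ≫ k₀ = c₀ ∧ m ≫ k₁ = c₁) →
      ∀ ℓ : A.obj 1 ⟶ K, ℓ ≫ k₀ = A.d 0 0 → ℓ ≫ k₁ = A.d 0 1 →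
      ∀ P : C, Pcl P → ∀ y : P ⟶ K, ∃ x : P ⟶ A.obj 1, x ≫ ℓ = y) ∧
    (∀ (n : ℕ) (K : C) (k : ℕ → (K ⟶ A.obj (n + 1))),
      (∀ i j, i < j → j ≤ n + 2 → k j ≫ A.d n i = k i ≫ A.d n (j - 1)) →
      (∀ (W : C) (c : ℕ → (W ⟶ A.obj (n + 1))),
        (∀ i j, i < j → j ≤ n + 2 → c j ≫ A.d n i = c i ≫ A.d n (j - 1)) →
        ∃! m : W ⟶ K, ∀ i, i ≤ n + 2 → m ≫ k i = c i) →
      ∀ ℓ : A.obj (n + 2) ⟶ K, (∀ i, i ≤ n + 2 → ℓ ≫ k i = A.d (n + 1) i) →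
      ∀ P : C, Pcl P → ∀ y : P ⟶ K, ∃ x : P ⟶ A.obj (n + 2), x ≫ ℓ = y) := by
  refine ⟨?_, ?_, ?_⟩
  · -- Part 1: augmentation is Pcl-epic
    intro P hP y
    obtain ⟨⟨hm, hc, p1, p2, p3, p4⟩, _⟩ := h P hP
    exact ⟨hm y, p1 y⟩
  · -- Part 2: kernel pair of the augmentation
    intro K k₀ k₁ hkk hK ℓ hℓ0 hℓ1 P hP y
    obtain ⟨⟨hm, hc, p1, p2, p3, p4⟩, kan1, kan2⟩ := h P hP
    have yaug : (y ≫ k₁) ≫ A.aug = (y ≫ k₀) ≫ A.aug := by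
      rw [Category.assoc, Category.assoc, hkk]
    obtain ⟨b, hb⟩ := kan2 0 0 (by omega)
      (fun i => if i ≤ 1 then hc 0 (y ≫ k₀) else hc 0 (y ≫ k₁)) (by
        intro i j hij hj hi0 hj0
        have hij' : i = 1 ∧ j = 2 := by omega
        obtain ⟨rfl, rfl⟩ := hij'
        show (if (2:ℕ) ≤ 1 then hc 0 (y ≫ k₀) else hc 0 (y ≫ k₁)) ≫ A.d 0 1 =
          (if (1:ℕ) ≤ 1 then hc 0 (y ≫ k₀) else hc 0 (y ≫ k₁)) ≫ A.d 0 1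
        rw [if_neg (by omega), if_pos (by omega), p3, p3, yaug])
    have hb1 : b ≫ A.d 1 1 = hc 0 (y ≫ k₀) := by
      have h1 := hb 1 (by omega) (by omega)
      simpa using h1
    have hb2 : b ≫ A.d 1 2 = hc 0 (y ≫ k₁) := by
      have h2 := hb 2 (by omega) (by omega)
      simpa using h2
    refine ⟨b ≫ A.d 1 0, ?_⟩
    have hx0 : (b ≫ A.d 1 0) ≫ A.d 0 0 = y ≫ k₀ := by
      have hdd : A.d 1 1 ≫ A.d 0 0 = A.d 1 0 ≫ A.d 0 0 := A.dd 0 0 1 (by omega) (by omega)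
      rw [Category.assoc, ← hdd, ← Category.assoc, hb1, p2]
    have hx1 : (b ≫ A.d 1 0) ≫ A.d 0 1 = y ≫ k₁ := by
      have hdd : A.d 1 2 ≫ A.d 0 0 = A.d 1 0 ≫ A.d 0 1 := A.dd 0 0 2 (by omega) (by omega)
      rw [Category.assoc, ← hdd, ← Category.assoc, hb2, p2]
    obtain ⟨μ, hμ, huniq⟩ := hK P (y ≫ k₀) (y ≫ k₁) yaug
    have e1 : (b ≫ A.d 1 0) ≫ ℓ = μ := by
      refine huniq _ ⟨?_, ?_⟩
      · rw [Category.assoc, hℓ0, hx0]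
      · rw [Category.assoc, hℓ1, hx1]
    have e2 : y = μ := huniq y ⟨rfl, rfl⟩
    rw [e1, e2]
  · -- Part 3: higher simplicial kernels
    intro n K k hk hK ℓ hℓ P hP y
    obtain ⟨⟨hm, hc, p1, p2, p3, p4⟩, kan1, kan2⟩ := h P hP
    have ycompat : ∀ i j, i < j → j ≤ n + 2 →
        (y ≫ k j) ≫ A.d n i = (y ≫ k i) ≫ A.d n (j - 1) := by
      intro i j hij hj
      rw [Category.assoc, Category.assoc, hk i j hij hj]
    -- Step 1: fill the horn missing the last face
    obtain ⟨b, hb⟩ := kan2 n (n + 2) (by omega) (fun i => y ≫ k i)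
      (fun i j hij hj _ _ => ycompat i j hij hj)
    have hb' : ∀ i, i ≤ n + 1 → b ≫ A.d (n + 1) i = y ≫ k i :=
      fun i hi => hb i (by omega) (by omega)
    set u : P ⟶ A.obj (n + 1) := b ≫ A.d (n + 1) (n + 2) with hu
    have upar : ∀ i, i ≤ n + 1 → u ≫ A.d n i = (y ≫ k (n + 2)) ≫ A.d n i := by
      intro i hi
      have hdd : A.d (n + 1) (n + 2) ≫ A.d n i = A.d (n + 1) i ≫ A.d n (n + 1) := by
        have e := A.dd n i (n + 2) (by omega) (by omega)
        rwa [show n + 2 - 1 = n + 1 from rfl] at e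
      rw [hu, Category.assoc, hdd, ← Category.assoc, hb' i hi]
      have yc := ycompat i (n + 2) (by omega) (by omega)
      rw [show n + 2 - 1 = n + 1 from rfl] at yc
      exact yc.symm
    -- Step 2: homotopy from u to y ≫ k (n+2) rel boundary, via a cone horn
    have gface : ∀ (v : P ⟶ A.obj (n + 1)) (t : ℕ), 1 ≤ t → t ≤ n + 2 →
        hc (n + 1) v ≫ A.d (n + 1) t = hc n (v ≫ A.d n (t - 1)) :=
      fun v t ht1 ht2 => p4 n v t ht1 ht2
    have argcompat : ∀ i' j', i' < j' → j' ≤ n + 2 →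
        (if j' + 1 = n + 2 then u else if j' + 1 = n + 3 then y ≫ k (n + 2)
          else (u ≫ A.d n j') ≫ A.s n n) ≫ A.d n i'
        = (if i' + 1 = n + 2 then u else if i' + 1 = n + 3 then y ≫ k (n + 2)
          else (u ≫ A.d n i') ≫ A.s n n) ≫ A.d n (j' - 1) := by
      intro i' j' hij hj2
      rcases Nat.lt_or_ge j' (n + 1) with hjn | hjn
      · -- 1 ≤ j' ≤ n : both arguments degenerate
        rw [if_neg (by omega), if_neg (by omega), if_neg (by omega), if_neg (by omega)]
        obtain ⟨nn, rfl⟩ : ∃ nn, n = nn + 1 := ⟨n - 1, by omega⟩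
        simp only [Category.assoc]
        rw [A.ds_lt nn i' (nn + 1) (by omega) (by omega),
          A.ds_lt nn (j' - 1) (nn + 1) (by omega) (by omega)]
        simp only [← Category.assoc]
        congr 1
        conv_lhs => rw [Category.assoc]
        conv_rhs => rw [Category.assoc]
        rw [A.dd nn i' j' hij (by omega)]
      · rcases Nat.lt_or_ge j' (n + 2) with hjn2 | hjn2
        · -- j' = n + 1
          have hj' : j' = n + 1 := by omega
          subst hj'
          rw [if_pos (by omega), if_neg (by omega), if_neg (by omega),
            show n + 1 - 1 = n from rfl]
          conv_rhs => rw [Category.assoc, A.ds_eq n n (le_refl n), Category.comp_id]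
        · -- j' = n + 2
          have hj' : j' = n + 2 := by omega
          subst hj'
          rw [if_neg (by omega), if_pos (by omega), show n + 2 - 1 = n + 1 from rfl]
          rcases Nat.lt_or_ge i' (n + 1) with hin | hin
          · rw [if_neg (by omega), if_neg (by omega)]
            conv_rhs => rw [Category.assoc, A.ds_eq' n n (le_refl n), Category.comp_id]
            exact (upar i' (by omega)).symm
          · have hi' : i' = n + 1 := by omega
            subst hi'
            rw [if_pos (by omega)]
            exact (upar (n + 1) (le_refl _)).symm
    obtain ⟨c₁, hc₁⟩ := kan2 (n + 1) 0 (by omega)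
      (fun j => hc (n + 1) (if j = n + 2 then u else if j = n + 3 then y ≫ k (n + 2)
        else (u ≫ A.d n (j - 1)) ≫ A.s n n)) (by
      intro i j hij hj hi0 hj0
      obtain ⟨i', rfl⟩ : ∃ i', i = i' + 1 := ⟨i - 1, by omega⟩
      obtain ⟨j', rfl⟩ : ∃ j', j = j' + 1 := ⟨j - 1, by omega⟩
      simp only [Nat.add_sub_cancel]
      rw [gface _ (i' + 1) (by omega) (by omega), gface _ j' (by omega) (by omega)]
      simp only [Nat.add_sub_cancel]
      exact congrArg (hc n) (argcompat i' j' (by omega) (by omega)))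
    have wface : ∀ j, 1 ≤ j → j ≤ n + 3 →
        (c₁ ≫ A.d (n + 2) 0) ≫ A.d (n + 1) (j - 1) =
        (if j = n + 2 then u else if j = n + 3 then y ≫ k (n + 2)
          else (u ≫ A.d n (j - 1)) ≫ A.s n n) := by
      intro j h1 h3
      have hdd : A.d (n + 2) j ≫ A.d (n + 1) 0 = A.d (n + 2) 0 ≫ A.d (n + 1) (j - 1) :=
        A.dd (n + 1) 0 j h1 h3
      rw [Category.assoc, ← hdd, ← Category.assoc, hc₁ j h3 (by omega)]
      exact p2 (n + 1) _
    -- Step 3: the correction horn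
    obtain ⟨c₂, hc₂⟩ := kan2 (n + 1) (n + 2) (by omega)
      (fun i => if i = n + 1 then b
        else if i = n + 3 then c₁ ≫ A.d (n + 2) 0
        else (y ≫ k i) ≫ A.s (n + 1) n) (by
      intro i j hij hj hi2 hj2
      show (if j = n + 1 then b else if j = n + 3 then c₁ ≫ A.d (n + 2) 0
          else (y ≫ k j) ≫ A.s (n + 1) n) ≫ A.d (n + 1) i
        = (if i = n + 1 then b else if i = n + 3 then c₁ ≫ A.d (n + 2) 0
          else (y ≫ k i) ≫ A.s (n + 1) n) ≫ A.d (n + 1) (j - 1)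
      rcases Nat.lt_or_ge j (n + 1) with hjn | hjn
      · -- i < j ≤ n : both degenerate
        rw [if_neg (by omega), if_neg (by omega), if_neg (by omega), if_neg (by omega)]
        simp only [Category.assoc]
        rw [A.ds_lt n i n (by omega) (by omega),
          A.ds_lt n (j - 1) n (by omega) (by omega)]
        simp only [← Category.assoc]
        congr 1
        exact ycompat i j hij (by omega)
      · rcases Nat.lt_or_ge j (n + 2) with hjn2 | hjn2
        · -- j = n + 1 : z j = b
          have hj' : j = n + 1 := by omega
          subst hj'
          rw [if_pos (by omega), if_neg (by omega), if_neg (by omega),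
            show n + 1 - 1 = n from rfl]
          conv_rhs => rw [Category.assoc, A.ds_eq (n + 1) n (by omega), Category.comp_id]
          exact hb' i (by omega)
        · -- j = n + 3 : z j = w
          have hj' : j = n + 3 := by omega
          subst hj'
          rw [if_neg (by omega), if_pos (by omega), show n + 3 - 1 = n + 2 from rfl]
          rcases Nat.lt_or_ge i (n + 1) with hin | hin
          · -- i ≤ n
            rw [if_neg (by omega), if_neg (by omega)]
            have hw := wface (i + 1) (by omega) (by omega)
            rw [if_neg (by omega), if_neg (by omega)] at hw
            simp only [Nat.add_sub_cancel] at hw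
            rw [hw]
            conv_rhs => rw [Category.assoc, A.ds_gt n (n + 2) n (by omega) (by omega)]
            rw [show n + 2 - 1 = n + 1 from rfl]
            have yc := ycompat i (n + 2) (by omega) (by omega)
            rw [show n + 2 - 1 = n + 1 from rfl] at yc
            rw [upar i (by omega), yc, Category.assoc]
          · -- i = n + 1 : z i = b
            have hi' : i = n + 1 := by omega
            subst hi'
            rw [if_pos (by omega)]
            have hw := wface (n + 2) (by omega) (by omega)
            rw [if_pos (by omega)] at hw
            rw [show n + 2 - 1 = n + 1 from rfl] at hw
            rw [hw, hu])
    -- the filler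
    have xface : ∀ i, i ≤ n + 2 →
        (c₂ ≫ A.d (n + 2) (n + 2)) ≫ A.d (n + 1) i = y ≫ k i := by
      intro i hi
      rcases Nat.lt_or_ge i (n + 2) with hin | hin
      · have hdd : A.d (n + 2) (n + 2) ≫ A.d (n + 1) i
            = A.d (n + 2) i ≫ A.d (n + 1) (n + 1) := by
          have e := A.dd (n + 1) i (n + 2) (by omega) (by omega)
          rwa [show n + 2 - 1 = n + 1 from rfl] at e
        rw [Category.assoc, hdd, ← Category.assoc, hc₂ i (by omega) (by omega)]
        show (if i = n + 1 then b else if i = n + 3 then c₁ ≫ A.d (n + 2) 0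
          else (y ≫ k i) ≫ A.s (n + 1) n) ≫ A.d (n + 1) (n + 1) = y ≫ k i
        rcases Nat.lt_or_ge i (n + 1) with hin1 | hin1
        · rw [if_neg (by omega), if_neg (by omega), Category.assoc,
            A.ds_eq' (n + 1) n (by omega), Category.comp_id]
        · have hi' : i = n + 1 := by omega
          subst hi'
          rw [if_pos (by omega)]
          exact hb' (n + 1) (le_refl _)
      · have hi' : i = n + 2 := by omega
        subst hi'
        have hdd : A.d (n + 2) (n + 3) ≫ A.d (n + 1) (n + 2)
            = A.d (n + 2) (n + 2) ≫ A.d (n + 1) (n + 2) := by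
          have e := A.dd (n + 1) (n + 2) (n + 3) (by omega) (by omega)
          rwa [show n + 3 - 1 = n + 2 from rfl] at e
        rw [Category.assoc, ← hdd, ← Category.assoc, hc₂ (n + 3) (by omega) (by omega)]
        show (if n + 3 = n + 1 then b else if n + 3 = n + 3 then c₁ ≫ A.d (n + 2) 0
          else (y ≫ k (n + 3)) ≫ A.s (n + 1) n) ≫ A.d (n + 1) (n + 2) = y ≫ k (n + 2)
        rw [if_neg (by omega), if_pos (by omega)]
        have hw := wface (n + 3) (by omega) (by omega)
        rw [if_neg (by omega), if_pos (by omega)] at hw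
        rw [show n + 3 - 1 = n + 2 from rfl] at hw
        exact hw
    obtain ⟨μ, hμ, huniq⟩ := hK P (fun i => y ≫ k i) ycompat
    have e1 : (c₂ ≫ A.d (n + 2) (n + 2)) ≫ ℓ = μ := by
      refine huniq _ (fun i hi => ?_)
      rw [Category.assoc, hℓ i hi]
      exact xface i hi
    have e2 : y = μ := huniq y (fun i hi => rfl)
    exact ⟨c₂ ≫ A.d (n + 2) (n + 2), e1.trans e2.symm⟩

end Statement14
end

section
/- Let C be a finitely complete category, 𝒫 a class of objects of C, and A = (A_n)_{n ≥ −1} a 𝒫-exact augmented simplicial object: the augmentation ∂₀ : A₀ → A_{−1} and, for every n ≥ 0, the comparison morphism from A_{n+1} to the simplicial kernel of the faces (∂ᵢ : A_n → A_{n−1})_{i ∈ [n]} are 𝒫-epic. Then for every P ∈ 𝒫 the augmented simplicial set Hom(P, A) is contractible. -/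
/-!
For `P ∈ 𝒫`, exactness of `A` says that in `Hom(P, A)` the augmentation is onto and every
family of simplices satisfying the simplicial-kernel identities is the family of faces of a
simplex one dimension up. A contraction is then chosen one dimension at a time: `h₋₁` is a
section of the augmentation, and `hₙ₊₁ x` is a simplex with faces `x, hₙ(x∂₀), …, hₙ(x∂ₙ₊₁)`.
The identities `∂ᵢhₙ = hₙ₋₁∂ᵢ₋₁` already achieved, together with the simplicial identities, are
exactly what make this family compatible. Simplicial kernels exist in `C` as equalizers of two
maps between finite products.
-/

namespace Statement15

open CategoryTheory

variable {C : Type*} [Category C]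

/-- An augmented simplicial object `A = (Aₙ)_{n ≥ -1}` in a category `C`:
`obj n = Aₙ` for `n ≥ 0`, `pt = A₋₁`, face operators `d n i : Aₙ₊₁ ⟶ Aₙ`
(meaningful for `i ≤ n + 1`), degeneracy operators `s n i : Aₙ ⟶ Aₙ₊₁`
(meaningful for `i ≤ n`), and augmentation `aug : A₀ ⟶ A₋₁`, subject to the
simplicial identities. -/
structure AugSimp (C : Type*) [Category C] where
  obj : ℕ → C
  pt : C
  d : (n i : ℕ) → (obj (n + 1) ⟶ obj n)
  s : (n i : ℕ) → (obj n ⟶ obj (n + 1))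
  aug : obj 0 ⟶ pt
  dd : ∀ n i j, i < j → j ≤ n + 2 →
    d (n + 1) j ≫ d n i = d (n + 1) i ≫ d n (j - 1)
  daug : d 0 0 ≫ aug = d 0 1 ≫ aug
  ds_lt : ∀ n i j, i < j → j ≤ n + 1 →
    s (n + 1) j ≫ d (n + 1) i = d n i ≫ s n (j - 1)
  ds_eq : ∀ n i, i ≤ n → s n i ≫ d n i = 𝟙 (obj n)
  ds_eq' : ∀ n i, i ≤ n → s n i ≫ d n (i + 1) = 𝟙 (obj n)
  ds_gt : ∀ n i j, j + 1 < i → i ≤ n + 2 →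
    s (n + 1) j ≫ d (n + 1) i = d n (i - 1) ≫ s n j
  ss : ∀ n i j, i ≤ j → j ≤ n →
    s n j ≫ s (n + 1) i = s n i ≫ s (n + 1) (j + 1)

/-- The augmented simplicial set `Hom(P, A)` is contractible: it admits a contraction,
i.e. maps `hₙ : Hom(P, Aₙ) → Hom(P, Aₙ₊₁)` for `n ≥ -1` with `∂₀ hₙ = 1` and
`∂ᵢ hₙ = hₙ₋₁ ∂ᵢ₋₁` for `i > 0`. -/
def AugSimp.ContractibleAt (A : AugSimp C) (P : C) : Prop :=
  ∃ (hm : (P ⟶ A.pt) → (P ⟶ A.obj 0))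
    (h : (n : ℕ) → (P ⟶ A.obj n) → (P ⟶ A.obj (n + 1))),
    (∀ x : P ⟶ A.pt, hm x ≫ A.aug = x) ∧
    (∀ (n : ℕ) (x : P ⟶ A.obj n), h n x ≫ A.d n 0 = x) ∧
    (∀ x : P ⟶ A.obj 0, h 0 x ≫ A.d 0 1 = hm (x ≫ A.aug)) ∧
    (∀ (n : ℕ) (x : P ⟶ A.obj (n + 1)) (i : ℕ), 1 ≤ i → i ≤ n + 2 →
      h (n + 1) x ≫ A.d (n + 1) i = h n (x ≫ A.d n (i - 1)))

/-- The simplicial set `Hom(P, A)` is Kan: every `(n, k)`-horn has a filler.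
The first clause treats horns of dimension `1`, the second those of dimension `≥ 2`. -/
def AugSimp.KanAt (A : AugSimp C) (P : C) : Prop :=
  (∀ k, k ≤ 1 → ∀ a : ℕ → (P ⟶ A.obj 0),
    ∃ b : P ⟶ A.obj 1, ∀ i, i ≤ 1 → i ≠ k → b ≫ A.d 0 i = a i) ∧
  (∀ (n k : ℕ), k ≤ n + 2 → ∀ a : ℕ → (P ⟶ A.obj (n + 1)),
    (∀ i j, i < j → j ≤ n + 2 → i ≠ k → j ≠ k →
      a j ≫ A.d n i = a i ≫ A.d n (j - 1)) →
    ∃ b : P ⟶ A.obj (n + 2), ∀ i, i ≤ n + 2 → i ≠ k → b ≫ A.d (n + 1) i = a i)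

open Limits

def IsSimplicialCone {X Y W : C} (f : ℕ → (X ⟶ Y)) (m : ℕ) (c : ℕ → (W ⟶ X)) : Prop :=
  ∀ i j, i < j → j ≤ m → c j ≫ f i = c i ≫ f (j - 1)

def IsSimplicialKernel {X Y K : C} (f : ℕ → (X ⟶ Y)) (m : ℕ) (k : ℕ → (K ⟶ X)) : Prop :=
  IsSimplicialCone f m k ∧
    ∀ (W : C) (c : ℕ → (W ⟶ X)), IsSimplicialCone f m c →
      ∃! u : W ⟶ K, ∀ i, i ≤ m → u ≫ k i = c i

theorem IsSimplicialKernel.exists_lift {X Y K Z P : C} {f : ℕ → (X ⟶ Y)} {m : ℕ}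
    {k : ℕ → (K ⟶ X)} (hk : IsSimplicialKernel f m k) {g : ℕ → (Z ⟶ X)}
    (hg : IsSimplicialCone f m g)
    (hsurj : ∀ ℓ : Z ⟶ K, (∀ i, i ≤ m → ℓ ≫ k i = g i) → ∀ y : P ⟶ K, ∃ x, x ≫ ℓ = y)
    {c : ℕ → (P ⟶ X)} (hc : IsSimplicialCone f m c) :
    ∃ x : P ⟶ Z, ∀ i, i ≤ m → x ≫ g i = c i := by
  obtain ⟨ℓ, hℓ, -⟩ := hk.2 Z g hg
  obtain ⟨u, hu, -⟩ := hk.2 P c hc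
  obtain ⟨x, rfl⟩ := hsurj ℓ hℓ u
  exact ⟨x, fun i hi => by rw [← hℓ i hi, ← Category.assoc, hu i hi]⟩

abbrev IndexPairs (m : ℕ) : Type := {p : Fin (m + 1) × Fin (m + 1) // p.1 < p.2}

section SimplicialKernel

variable [HasFiniteLimits C] {X Y : C} (f : ℕ → (X ⟶ Y)) (m : ℕ)

namespace simplicialKernel

noncomputable def leftFaces : (∏ᶜ fun _ : Fin (m + 1) => X) ⟶ ∏ᶜ fun _ : IndexPairs m => Y :=
  Pi.lift fun p => Pi.π _ p.1.2 ≫ f p.1.1.val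

noncomputable def rightFaces : (∏ᶜ fun _ : Fin (m + 1) => X) ⟶ ∏ᶜ fun _ : IndexPairs m => Y :=
  Pi.lift fun p => Pi.π _ p.1.1 ≫ f (p.1.2.val - 1)

end simplicialKernel

open simplicialKernel in
noncomputable abbrev simplicialKernel : C :=
  equalizer (leftFaces f m) (rightFaces f m)

namespace simplicialKernel

-- Indices `i > m` are read modulo `m + 1`; only `i ≤ m` is meaningful.
noncomputable def ι (i : ℕ) : simplicialKernel f m ⟶ X :=
  equalizer.ι _ _ ≫ Pi.π _ (Fin.ofNat (m + 1) i)

theorem ι_eq (i : ℕ) (hi : i ≤ m) :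
    ι f m i = equalizer.ι (leftFaces f m) (rightFaces f m) ≫ Pi.π _ ⟨i, by omega⟩ := by
  rw [ι, show Fin.ofNat (m + 1) i = ⟨i, by omega⟩ from Fin.ext (Nat.mod_eq_of_lt (by omega))]

theorem hom_ext {W : C} {u v : W ⟶ simplicialKernel f m}
    (h : ∀ i, i ≤ m → u ≫ ι f m i = v ≫ ι f m i) : u = v := by
  refine equalizer.hom_ext (Pi.hom_ext _ _ fun i => ?_)
  simpa only [ι_eq f m i (by omega), Category.assoc] using h i (by omega)

end simplicialKernel

open simplicialKernel in
theorem isSimplicialKernel_simplicialKernel :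
    IsSimplicialKernel f m (simplicialKernel.ι f m) := by
  refine ⟨fun i j hij hj => ?_, fun W c hc => ?_⟩
  · have h := equalizer.condition (leftFaces f m) (rightFaces f m) =≫
      Pi.π _ (⟨(⟨i, by omega⟩, ⟨j, by omega⟩), hij⟩ : IndexPairs m)
    simp only [leftFaces, rightFaces, Category.assoc, Pi.lift_π] at h
    rw [ι_eq f m i (by omega), ι_eq f m j hj, Category.assoc, Category.assoc]
    exact h
  · have hcond : Pi.lift (fun i : Fin (m + 1) => c i) ≫ leftFaces f m =
        Pi.lift (fun i : Fin (m + 1) => c i) ≫ rightFaces f m :=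
      Pi.hom_ext _ _ fun p => by
        simpa [leftFaces, rightFaces] using hc _ _ p.2 (by omega)
    have hlift : ∀ i, i ≤ m → equalizer.lift _ hcond ≫ ι f m i = c i := fun i hi => by
      simp [ι_eq f m i hi]
    exact ⟨_, hlift, fun u hu => hom_ext f m fun i hi => by rw [hu i hi, hlift i hi]⟩

end SimplicialKernel

theorem existsUnique_pullback_lift {X Y W : C} {g : X ⟶ Y} [HasPullback g g]
    (c₀ c₁ : W ⟶ X) (hc : c₁ ≫ g = c₀ ≫ g) :
    ∃! u : W ⟶ pullback g g, u ≫ pullback.fst g g = c₀ ∧ u ≫ pullback.snd g g = c₁ :=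
  ⟨pullback.lift c₀ c₁ hc.symm, ⟨pullback.lift_fst _ _ _, pullback.lift_snd _ _ _⟩,
    fun _ hu => pullback.hom_ext (hu.1.trans (pullback.lift_fst _ _ _).symm)
      (hu.2.trans (pullback.lift_snd _ _ _).symm)⟩

theorem exists_seq_of_exists_succ {T : ℕ → Type*} (p : ∀ n, T n → Prop)
    (r : ∀ n, T n → T (n + 1) → Prop) {t₀ : T 0} (h₀ : p 0 t₀)
    (step : ∀ n t, p n t → ∃ t', p (n + 1) t' ∧ r n t t') :
    ∃ s : ∀ n, T n, s 0 = t₀ ∧ ∀ n, p n (s n) ∧ r n (s n) (s (n + 1)) := by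
  choose next hnext hr using step
  let s : ∀ n, {t : T n // p n t} := fun n =>
    Nat.rec ⟨t₀, h₀⟩ (fun n t => ⟨next n t.1 t.2, hnext n t.1 t.2⟩) n
  exact ⟨fun n => (s n).1, rfl, fun n => ⟨(s n).2, hr n _ _⟩⟩

namespace AugSimp

variable (A : AugSimp C) {P : C}

def coneBoundary (n : ℕ) (f : (P ⟶ A.obj n) → (P ⟶ A.obj (n + 1)))
    (x : P ⟶ A.obj (n + 1)) : ℕ → (P ⟶ A.obj (n + 1))
  | 0 => x
  | i + 1 => f (x ≫ A.d n i)

def IsContractionStage (n : ℕ) (f : (P ⟶ A.obj n) → (P ⟶ A.obj (n + 1))) : Prop :=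
  (∀ z, f z ≫ A.d n 0 = z) ∧ ∀ x, IsSimplicialCone (A.d n) (n + 2) (A.coneBoundary n f x)

theorem isSimplicialCone_coneBoundary {n : ℕ} {f : (P ⟶ A.obj n) → (P ⟶ A.obj (n + 1))}
    (hf₀ : ∀ z, f z ≫ A.d n 0 = z)
    (hf : ∀ x i j, i < j → j ≤ n + 1 →
      f (x ≫ A.d n j) ≫ A.d n (i + 1) = f (x ≫ A.d n i) ≫ A.d n j)
    (x : P ⟶ A.obj (n + 1)) : IsSimplicialCone (A.d n) (n + 2) (A.coneBoundary n f x) := by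
  rintro (_ | i) (_ | j) hij hj
  · omega
  · simp [coneBoundary, hf₀]
  · omega
  · simpa [coneBoundary] using hf x i j (by omega) (by omega)

theorem exists_isContractionStage_zero
    (fill₀ : ∀ c₀ c₁ : P ⟶ A.obj 0, c₀ ≫ A.aug = c₁ ≫ A.aug →
      ∃ x : P ⟶ A.obj 1, x ≫ A.d 0 0 = c₀ ∧ x ≫ A.d 0 1 = c₁)
    {hm : (P ⟶ A.pt) → (P ⟶ A.obj 0)} (hm_aug : ∀ y, hm y ≫ A.aug = y) :
    ∃ f, A.IsContractionStage 0 f ∧ ∀ x, f x ≫ A.d 0 1 = hm (x ≫ A.aug) := by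
  choose f hf₀ hf₁ using fun x => fill₀ x (hm (x ≫ A.aug)) (hm_aug _).symm
  refine ⟨f, ⟨hf₀, A.isSimplicialCone_coneBoundary hf₀ ?_⟩, hf₁⟩
  intro x i j hij hj
  obtain ⟨rfl, rfl⟩ : i = 0 ∧ j = 1 := by omega
  change f _ ≫ A.d 0 1 = _
  rw [hf₁, hf₁, Category.assoc, Category.assoc, A.daug]

theorem exists_isContractionStage_succ {n : ℕ}
    (fill : ∀ c : ℕ → (P ⟶ A.obj (n + 1)), IsSimplicialCone (A.d n) (n + 2) c →
      ∃ x : P ⟶ A.obj (n + 2), ∀ i, i ≤ n + 2 → x ≫ A.d (n + 1) i = c i)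
    {f : (P ⟶ A.obj n) → (P ⟶ A.obj (n + 1))} (hf : A.IsContractionStage n f) :
    ∃ f', A.IsContractionStage (n + 1) f' ∧
      ∀ x i, i ≤ n + 1 → f' x ≫ A.d (n + 1) (i + 1) = f (x ≫ A.d n i) := by
  choose f' hf' using fun x => fill _ (hf.2 x)
  have face : ∀ x i, i ≤ n + 1 → f' x ≫ A.d (n + 1) (i + 1) = f (x ≫ A.d n i) :=
    fun x i hi => hf' x (i + 1) (by omega)
  have face₀ : ∀ z, f' z ≫ A.d (n + 1) 0 = z := fun z => hf' z 0 (by omega)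
  refine ⟨f', ⟨face₀, A.isSimplicialCone_coneBoundary face₀ ?_⟩, face⟩
  intro x i j hij hj
  obtain ⟨j, rfl⟩ : ∃ j', j = j' + 1 := ⟨j - 1, by omega⟩
  rw [face _ i (by omega), face _ j (by omega), Category.assoc, Category.assoc,
    A.dd n i (j + 1) hij hj, Nat.add_sub_cancel]

theorem contractibleAt_of_exists_fill
    (haug : ∀ y : P ⟶ A.pt, ∃ x : P ⟶ A.obj 0, x ≫ A.aug = y)
    (fill₀ : ∀ c₀ c₁ : P ⟶ A.obj 0, c₀ ≫ A.aug = c₁ ≫ A.aug →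
      ∃ x : P ⟶ A.obj 1, x ≫ A.d 0 0 = c₀ ∧ x ≫ A.d 0 1 = c₁)
    (fill : ∀ n (c : ℕ → (P ⟶ A.obj (n + 1))), IsSimplicialCone (A.d n) (n + 2) c →
      ∃ x : P ⟶ A.obj (n + 2), ∀ i, i ≤ n + 2 → x ≫ A.d (n + 1) i = c i) :
    A.ContractibleAt P := by
  choose hm hm_aug using haug
  obtain ⟨f₀, hf₀, hf₀_face⟩ := A.exists_isContractionStage_zero fill₀ hm_aug
  obtain ⟨h, rfl, hh⟩ := exists_seq_of_exists_succ (fun n => A.IsContractionStage n)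
    (fun n f f' => ∀ x i, i ≤ n + 1 → f' x ≫ A.d (n + 1) (i + 1) = f (x ≫ A.d n i)) hf₀
    (fun n _ hf => A.exists_isContractionStage_succ (fill n) hf)
  refine ⟨hm, h, hm_aug, fun n => (hh n).1.1, hf₀_face, ?_⟩
  intro n x i hi₁ hi
  obtain ⟨i, rfl⟩ : ∃ i', i = i' + 1 := ⟨i - 1, by omega⟩
  rw [Nat.add_sub_cancel]
  exact (hh n).2 x i (by omega)

end AugSimp

/-- Let `C` be finitely complete, `Pcl` a class of objects and `A` a
`Pcl`-exact augmented simplicial object: the augmentation is `Pcl`-epic and, for every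
`n ≥ 0`, the comparison morphism from `Aₙ₊₁` to the simplicial kernel of the faces
`(∂ᵢ : Aₙ ⟶ Aₙ₋₁)_{i ∈ [n]}` is `Pcl`-epic (the clause `haug` is the augmentation,
`hker0` the case `n = 0`, i.e. the kernel pair of the augmentation, and `hker` the case
`n ≥ 1`).  Then for every `P ∈ Pcl` the augmented simplicial set `Hom(P, A)` is
contractible. -/
theorem statement15 [Limits.HasFiniteLimits C]
    (Pcl : C → Prop) (A : AugSimp C)
    (haug : ∀ P : C, Pcl P → ∀ y : P ⟶ A.pt, ∃ x : P ⟶ A.obj 0, x ≫ A.aug = y)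
    (hker0 : ∀ (K : C) (k₀ k₁ : K ⟶ A.obj 0),
      k₁ ≫ A.aug = k₀ ≫ A.aug →
      (∀ (W : C) (c₀ c₁ : W ⟶ A.obj 0), c₁ ≫ A.aug = c₀ ≫ A.aug →
        ∃! m : W ⟶ K, m ≫ k₀ = c₀ ∧ m ≫ k₁ = c₁) →
      ∀ ℓ : A.obj 1 ⟶ K, ℓ ≫ k₀ = A.d 0 0 → ℓ ≫ k₁ = A.d 0 1 →
      ∀ P : C, Pcl P → ∀ y : P ⟶ K, ∃ x : P ⟶ A.obj 1, x ≫ ℓ = y)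
    (hker : ∀ (n : ℕ) (K : C) (k : ℕ → (K ⟶ A.obj (n + 1))),
      (∀ i j, i < j → j ≤ n + 2 → k j ≫ A.d n i = k i ≫ A.d n (j - 1)) →
      (∀ (W : C) (c : ℕ → (W ⟶ A.obj (n + 1))),
        (∀ i j, i < j → j ≤ n + 2 → c j ≫ A.d n i = c i ≫ A.d n (j - 1)) →
        ∃! m : W ⟶ K, ∀ i, i ≤ n + 2 → m ≫ k i = c i) →
      ∀ ℓ : A.obj (n + 2) ⟶ K, (∀ i, i ≤ n + 2 → ℓ ≫ k i = A.d (n + 1) i) →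
      ∀ P : C, Pcl P → ∀ y : P ⟶ K, ∃ x : P ⟶ A.obj (n + 2), x ≫ ℓ = y) :
    ∀ P : C, Pcl P → A.ContractibleAt P := by
  intro P hP
  have hK n := isSimplicialKernel_simplicialKernel (A.d n) (n + 2)
  refine A.contractibleAt_of_exists_fill (haug P hP) (fun c₀ c₁ hc => ?_)
    (fun n c hc => (hK n).exists_lift (A.dd n)
      (fun ℓ hℓ => hker n _ _ (hK n).1 (hK n).2 ℓ hℓ P hP) hc)
  obtain ⟨x, hx⟩ := hker0 _ _ _ pullback.condition.symm (fun _ => existsUnique_pullback_lift)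
    _ (pullback.lift_fst _ _ A.daug) (pullback.lift_snd _ _ A.daug) P hP
    (pullback.lift c₀ c₁ hc)
  refine ⟨x, ?_, ?_⟩
  · rw [← pullback.lift_fst _ _ A.daug, ← Category.assoc, hx, pullback.lift_fst]
  · rw [← pullback.lift_snd _ _ A.daug, ← Category.assoc, hx, pullback.lift_snd]

end Statement15
end
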